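/- arXiv:1409.2706 — 3 statements merged into one kernel-verified Lean document; each statement's English description precedes it below -/
import Mathlib

section
/- Let κ > 0. There exists a constant C = C(κ, X) ≥ 0 such that for all ρ₁, ρ₂ ∈ L²(𝕋³) with ρ₁ ≥ κ and ρ₂ ≥ κ almost everywhere, ‖M[ρ₁]^{1/2} − M[ρ₂]^{1/2}‖_{L(X,X)} ≤ C ‖ρ₁ − ρ₂‖_{L²(𝕋³)}; that is, the map ρ ↦ M[ρ]^{1/2} is Lipschitz continuous on the set of densities bounded below by κ. -/
open MeasureTheory
open scoped RealInnerProductSpace ENNReal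

noncomputable section

instance : Fact ((0:ℝ) < 1) := ⟨one_pos⟩

/-- The three-dimensional torus `𝕋³ = [0,1]³`, realized as a product of three unit circles,
equipped with its Haar (Lebesgue) probability measure `volume`. -/
abbrev Torus3 := Fin 3 → AddCircle (1 : ℝ)

/-- The Lebesgue space `L²(𝕋³; ℝ³)`. -/
abbrev L2V := Lp (EuclideanSpace ℝ (Fin 3)) 2 (volume : Measure Torus3)

section Helpers

set_option linter.unusedSectionVars false

variable {E : Type*} [NormedAddCommGroup E] [InnerProductSpace ℝ E] [FiniteDimensional ℝ E]

lemma onb_inner_expansion {n : ℕ} (b : OrthonormalBasis (Fin n) ℝ E) (x y : E) :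
    ⟪x, y⟫ = ∑ i, b.repr x i * b.repr y i := by
  rw [(b.repr.inner_map_map x y).symm, PiLp.inner_apply]
  simp only [RCLike.inner_apply, conj_trivial]
  exact Finset.sum_congr rfl fun i _ => mul_comm _ _

lemma sqrt_lower_bound (S : E →L[ℝ] E)
    (hsym : ∀ v w : E, ⟪S v, w⟫ = ⟪v, S w⟫) (hpsd : ∀ v : E, 0 ≤ ⟪S v, v⟫)
    (κ : ℝ) (hS2 : ∀ v : E, κ * ‖v‖ ^ 2 ≤ ⟪S (S v), v⟫) :
    ∀ v : E, Real.sqrt κ * ‖v‖ ^ 2 ≤ ⟪S v, v⟫ := by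
  intro v
  have hsymL : (S : E →ₗ[ℝ] E).IsSymmetric := fun x y => hsym x y
  have hn : Module.finrank ℝ E = Module.finrank ℝ E := rfl
  set b := hsymL.eigenvectorBasis hn with hbdef
  set μ := hsymL.eigenvalues hn with hμdef
  have hb : ∀ i, S (b i) = μ i • b i := fun i => hsymL.apply_eigenvectorBasis hn i
  have hbn : ∀ i, ⟪(b i : E), b i⟫ = 1 := by
    intro i
    rw [real_inner_self_eq_norm_sq, b.orthonormal.1 i]; norm_num
  have hμge : ∀ i, Real.sqrt κ ≤ μ i := by
    intro i
    have h0 : 0 ≤ μ i := by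
      have := hpsd (b i)
      rwa [hb i, real_inner_smul_left, hbn i, mul_one] at this
    have hsq : κ ≤ μ i ^ 2 := by
      have := hS2 (b i)
      rw [b.orthonormal.1 i] at this
      rw [hb i, _root_.map_smul, hb i, real_inner_smul_left, real_inner_smul_left, hbn i] at this
      nlinarith
    calc Real.sqrt κ ≤ Real.sqrt (μ i ^ 2) := Real.sqrt_le_sqrt hsq
      _ = μ i := Real.sqrt_sq h0
  have hrep : ∀ i, b.repr (S v) i = μ i * b.repr v i :=
    fun i => hsymL.eigenvectorBasis_apply_self_apply hn v i
  have e1 : ⟪S v, v⟫ = ∑ i, μ i * (b.repr v i) ^ 2 := by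
    rw [onb_inner_expansion b (S v) v]
    exact Finset.sum_congr rfl fun i _ => by rw [hrep i]; ring
  have e2 : ‖v‖ ^ 2 = ∑ i, (b.repr v i) ^ 2 := by
    rw [← real_inner_self_eq_norm_sq, onb_inner_expansion b v v]
    exact Finset.sum_congr rfl fun i _ => by ring
  rw [e1, e2, Finset.mul_sum]
  exact Finset.sum_le_sum fun i _ =>
    mul_le_mul_of_nonneg_right (hμge i) (sq_nonneg _)

lemma opnorm_le_of_eigen (D : E →L[ℝ] E)
    (hsym : ∀ v w : E, ⟪D v, w⟫ = ⟪v, D w⟫) (K : ℝ) (hK : 0 ≤ K)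
    (h : ∀ v : E, ‖v‖ = 1 → ∀ μ : ℝ, D v = μ • v → |μ| ≤ K) : ‖D‖ ≤ K := by
  have hsymL : (D : E →ₗ[ℝ] E).IsSymmetric := fun x y => hsym x y
  have hn : Module.finrank ℝ E = Module.finrank ℝ E := rfl
  set b := hsymL.eigenvectorBasis hn
  set μ := hsymL.eigenvalues hn
  have hb : ∀ i, D (b i) = μ i • b i := fun i => hsymL.apply_eigenvectorBasis hn i
  have hμ : ∀ i, |μ i| ≤ K := fun i => h (b i) (b.orthonormal.1 i) (μ i) (hb i)
  refine D.opNorm_le_bound hK fun v => ?_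
  have hrep : ∀ i, b.repr (D v) i = μ i * b.repr v i :=
    fun i => hsymL.eigenvectorBasis_apply_self_apply hn v i
  have h2 : ‖D v‖ ^ 2 ≤ (K * ‖v‖) ^ 2 := by
    rw [← real_inner_self_eq_norm_sq, onb_inner_expansion b (D v) (D v)]
    have hterm : ∀ i, b.repr (D v) i * b.repr (D v) i ≤ K ^ 2 * (b.repr v i) ^ 2 := by
      intro i
      rw [hrep i]
      have h1 : μ i ^ 2 ≤ K ^ 2 := sq_le_sq' (neg_le_of_abs_le (hμ i)) (le_of_abs_le (hμ i))
      nlinarith [sq_nonneg (b.repr v i)]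
    calc ∑ i, b.repr (D v) i * b.repr (D v) i ≤ ∑ i, K ^ 2 * (b.repr v i) ^ 2 :=
          Finset.sum_le_sum fun i _ => hterm i
      _ = K ^ 2 * ∑ i, (b.repr v i) ^ 2 := by rw [Finset.mul_sum]
      _ = K ^ 2 * ‖v‖ ^ 2 := by
          congr 1
          rw [← real_inner_self_eq_norm_sq, onb_inner_expansion b v v]
          exact Finset.sum_congr rfl fun i _ => by ring
      _ = (K * ‖v‖) ^ 2 := by ring
  exact (pow_le_pow_iff_left₀ (norm_nonneg _) (by positivity) two_ne_zero).mp h2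

lemma sqrt_diff_opnorm (S₁ S₂ : E →L[ℝ] E)
    (hs₁ : ∀ v w : E, ⟪S₁ v, w⟫ = ⟪v, S₁ w⟫) (hs₂ : ∀ v w : E, ⟪S₂ v, w⟫ = ⟪v, S₂ w⟫)
    (c K : ℝ) (hc : 0 < c) (hK : 0 ≤ K)
    (hl₁ : ∀ v : E, c * ‖v‖ ^ 2 ≤ ⟪S₁ v, v⟫) (hl₂ : ∀ v : E, c * ‖v‖ ^ 2 ≤ ⟪S₂ v, v⟫)
    (hM : ∀ v : E, ‖v‖ = 1 → |⟪S₁ (S₁ v), v⟫ - ⟪S₂ (S₂ v), v⟫| ≤ K) :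
    ‖S₁ - S₂‖ ≤ K / (2 * c) := by
  have hsymD : ∀ v w : E, ⟪(S₁ - S₂) v, w⟫ = ⟪v, (S₁ - S₂) w⟫ := by
    intro v w
    simp only [ContinuousLinearMap.sub_apply, inner_sub_left, inner_sub_right, hs₁, hs₂]
  refine opnorm_le_of_eigen _ hsymD _ (by positivity) fun v hv μ hμv => ?_
  have hDv : S₁ v - S₂ v = μ • v := by
    simpa [ContinuousLinearMap.sub_apply] using hμv
  have key : ⟪S₁ (S₁ v), v⟫ - ⟪S₂ (S₂ v), v⟫ = μ * (⟪S₁ v, v⟫ + ⟪S₂ v, v⟫) := by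
    have e1 : S₁ (S₁ v) - S₂ (S₂ v) = S₁ (S₁ v - S₂ v) + ((S₁ (S₂ v)) - S₂ (S₂ v)) := by
      rw [map_sub]; abel
    calc ⟪S₁ (S₁ v), v⟫ - ⟪S₂ (S₂ v), v⟫ = ⟪S₁ (S₁ v) - S₂ (S₂ v), v⟫ := by
          rw [inner_sub_left]
      _ = ⟪S₁ (S₁ v - S₂ v), v⟫ + ⟪S₁ (S₂ v) - S₂ (S₂ v), v⟫ := by
          rw [e1, inner_add_left]
      _ = μ * ⟪S₁ v, v⟫ + μ * ⟪S₂ v, v⟫ := by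
        have A : ⟪S₁ (S₁ v - S₂ v), v⟫ = μ * ⟪S₁ v, v⟫ := by
          rw [hDv, _root_.map_smul, real_inner_smul_left]
        have B : ⟪S₁ (S₂ v) - S₂ (S₂ v), v⟫ = μ * ⟪S₂ v, v⟫ := by
          have e2 : S₁ (S₂ v) - S₂ (S₂ v) = (S₁ - S₂) (S₂ v) := by
            simp [ContinuousLinearMap.sub_apply]
          rw [e2, hsymD (S₂ v) v, hμv, real_inner_smul_right]
        rw [A, B]
      _ = μ * (⟪S₁ v, v⟫ + ⟪S₂ v, v⟫) := by ring
  have ha₁ : c ≤ ⟪S₁ v, v⟫ := by have := hl₁ v; rwa [hv, one_pow, mul_one] at this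
  have ha₂ : c ≤ ⟪S₂ v, v⟫ := by have := hl₂ v; rwa [hv, one_pow, mul_one] at this
  have habs : |μ| * (2 * c) ≤ K := by
    have h1 : |μ| * (2 * c) ≤ |μ| * (⟪S₁ v, v⟫ + ⟪S₂ v, v⟫) :=
      mul_le_mul_of_nonneg_left (by linarith) (abs_nonneg μ)
    have hs : (0:ℝ) ≤ ⟪S₁ v, v⟫ + ⟪S₂ v, v⟫ := by linarith
    have h2 : |μ| * (⟪S₁ v, v⟫ + ⟪S₂ v, v⟫) = |μ * (⟪S₁ v, v⟫ + ⟪S₂ v, v⟫)| := by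
      rw [abs_mul, abs_of_nonneg hs]
    rw [h2, ← key] at h1
    exact h1.trans (hM v hv)
  rw [le_div_iff₀ (by positivity)]
  exact habs

end Helpers



lemma exists_bound_aux {E F : Type*} [NormedAddCommGroup E] [NormedSpace ℝ E]
    [FiniteDimensional ℝ E] [NormedAddCommGroup F] [NormedSpace ℝ F]
    (f : E →ₗ[ℝ] F) : ∃ C : ℝ, 0 ≤ C ∧ ∀ v : E, ‖f v‖ ≤ C * ‖v‖ :=
  ⟨‖LinearMap.toContinuousLinearMap f‖, norm_nonneg _, fun v =>
    (LinearMap.toContinuousLinearMap f).le_opNorm v⟩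

/-- The essentially bounded representative as a linear map into `L∞`, and the resulting
uniform `L∞`-`L²` bound on the finite-dimensional subspace `X`. -/
lemma exists_linf_bound (X : Submodule ℝ L2V) [FiniteDimensional ℝ X]
    (hXbdd : ∀ v : X, MemLp (⇑(v : L2V)) ∞ (volume : Measure Torus3)) :
    ∃ C : ℝ, 0 ≤ C ∧ ∀ v : X,
      (eLpNorm (⇑(v : L2V)) ∞ (volume : Measure Torus3)).toReal ≤ C * ‖v‖ := by
  let Linf : X →ₗ[ℝ] Lp (EuclideanSpace ℝ (Fin 3)) ∞ (volume : Measure Torus3) :=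
    { toFun := fun v => (hXbdd v).toLp _
      map_add' := fun v w => by
        rw [← MemLp.toLp_add (hXbdd v) (hXbdd w)]
        exact MemLp.toLp_congr _ _ (by
          have hc : ((v + w : X) : L2V) = (v : L2V) + (w : L2V) := rfl
          rw [hc]
          exact Lp.coeFn_add (v : L2V) (w : L2V))
      map_smul' := fun c v => by
        simp only [RingHom.id_apply]
        rw [← MemLp.toLp_const_smul c (hXbdd v)]
        exact MemLp.toLp_congr _ _ (by
          have hc : ((c • v : X) : L2V) = c • (v : L2V) := rfl
          rw [hc]
          exact Lp.coeFn_smul c (v : L2V)) }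
  obtain ⟨C, hC0, hC⟩ := exists_bound_aux Linf
  refine ⟨C, hC0, fun v => ?_⟩
  have h1 : (eLpNorm (⇑(v : L2V)) ∞ (volume : Measure Torus3)).toReal = ‖Linf v‖ :=
    (Lp.norm_toLp _ (hXbdd v)).symm
  rw [h1]
  exact hC v

set_option maxHeartbeats 2000000 in
set_option synthInstance.maxHeartbeats 1000000 in
/-- Let `X` be a finite-dimensional subspace of `L²(𝕋³;ℝ³)` all of whose
elements are essentially bounded, and let `κ > 0`.  There is a constant `C = C(κ, X) ≥ 0`
such that for all `ρ₁, ρ₂ ∈ L²(𝕋³)` with `ρ₁, ρ₂ ≥ κ` a.e., the (unique symmetric positive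
semidefinite) square roots of the mass operators `M[ρ₁], M[ρ₂]` (the latter characterized by
`⟪M[ρ]v, w⟫_{L²} = ∫ ρ v·w dx`) satisfy
`‖M[ρ₁]^{1/2} − M[ρ₂]^{1/2}‖_{L(X,X)} ≤ C ‖ρ₁ − ρ₂‖_{L²}`;
i.e. `ρ ↦ M[ρ]^{1/2}` is Lipschitz on the set of densities bounded below by `κ`. -/
theorem stmt_3
    (X : Submodule ℝ L2V) [FiniteDimensional ℝ X]
    (hXbdd : ∀ v : X, MemLp (⇑(v : L2V)) ∞ (volume : Measure Torus3))
    (κ : ℝ) (hκ : 0 < κ) :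
    ∃ C : ℝ, 0 ≤ C ∧
      ∀ ρ₁ ρ₂ : Lp ℝ 2 (volume : Measure Torus3),
        (∀ᵐ x ∂(volume : Measure Torus3), κ ≤ ρ₁ x) →
        (∀ᵐ x ∂(volume : Measure Torus3), κ ≤ ρ₂ x) →
        ∀ M₁ M₂ S₁ S₂ : X →L[ℝ] X,
          (∀ v w : X, ⟪M₁ v, w⟫ =
            ∫ x, ρ₁ x * ⟪(⇑(v : L2V)) x, (⇑(w : L2V)) x⟫ ∂(volume : Measure Torus3)) →
          (∀ v w : X, ⟪M₂ v, w⟫ =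
            ∫ x, ρ₂ x * ⟪(⇑(v : L2V)) x, (⇑(w : L2V)) x⟫ ∂(volume : Measure Torus3)) →
          (∀ v w : X, ⟪S₁ v, w⟫ = ⟪v, S₁ w⟫) → (∀ v : X, 0 ≤ ⟪S₁ v, v⟫) →
          S₁.comp S₁ = M₁ →
          (∀ v w : X, ⟪S₂ v, w⟫ = ⟪v, S₂ w⟫) → (∀ v : X, 0 ≤ ⟪S₂ v, v⟫) →
          S₂.comp S₂ = M₂ →
          ‖S₁ - S₂‖ ≤ C * ‖ρ₁ - ρ₂‖ := by
  classical
  obtain ⟨CX, hCX0, hCX⟩ := exists_linf_bound X hXbdd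
  have hinf : ∀ v : X, ∀ᵐ x ∂(volume : Measure Torus3),
      ‖(⇑(v : L2V)) x‖ ≤ (eLpNorm (⇑(v : L2V)) ∞ (volume : Measure Torus3)).toReal := by
    intro v
    filter_upwards [ae_le_eLpNormEssSup (f := ⇑(v : L2V)) (μ := (volume : Measure Torus3))]
      with x hx
    have hne : eLpNormEssSup (⇑(v : L2V)) (volume : Measure Torus3) ≠ ⊤ := by
      rw [← eLpNorm_exponent_top]; exact (hXbdd v).2.ne
    calc ‖(⇑(v : L2V)) x‖ = ((‖(⇑(v : L2V)) x‖₊ : ℝ≥0∞)).toReal := by simp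
      _ ≤ (eLpNormEssSup (⇑(v : L2V)) (volume : Measure Torus3)).toReal :=
          ENNReal.toReal_mono hne hx
      _ = _ := by rw [← eLpNorm_exponent_top]
  refine ⟨CX / (2 * Real.sqrt κ), by positivity, ?_⟩
  intro ρ₁ ρ₂ hρ₁ hρ₂ M₁ M₂ S₁ S₂ hM₁ hM₂ hs₁ hp₁ hsq₁ hs₂ hp₂ hsq₂
  have hcpos : 0 < Real.sqrt κ := Real.sqrt_pos.mpr hκ
  -- the diagonal density function
  set g : X → Torus3 → ℝ :=
    fun v x => (inner ℝ ((⇑(v : L2V)) x) ((⇑(v : L2V)) x) : ℝ) with hgdef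
  have hgint : ∀ v : X, Integrable (g v) (volume : Measure Torus3) :=
    fun v => L2.integrable_inner (𝕜 := ℝ) (v : L2V) (v : L2V)
  have hgae : ∀ v : X, ∀ᵐ x ∂(volume : Measure Torus3),
      ‖g v x‖ ≤ (eLpNorm (⇑(v : L2V)) ∞ (volume : Measure Torus3)).toReal * ‖(⇑(v : L2V)) x‖ := by
    intro v
    filter_upwards [hinf v] with x hx
    calc ‖g v x‖ = |(inner ℝ ((⇑(v : L2V)) x) ((⇑(v : L2V)) x) : ℝ)| := rfl
      _ ≤ ‖(⇑(v : L2V)) x‖ * ‖(⇑(v : L2V)) x‖ := abs_real_inner_le_norm _ _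
      _ ≤ (eLpNorm (⇑(v : L2V)) ∞ (volume : Measure Torus3)).toReal * ‖(⇑(v : L2V)) x‖ :=
          mul_le_mul_of_nonneg_right hx (norm_nonneg _)
  have hgmem : ∀ v : X, MemLp (g v) 2 (volume : Measure Torus3) := fun v =>
    MemLp.of_le_mul (Lp.memLp (v : L2V))
      ((Lp.aestronglyMeasurable (v : L2V)).inner (Lp.aestronglyMeasurable (v : L2V)))
      (hgae v)
  have hρg : ∀ (ρ : Lp ℝ 2 (volume : Measure Torus3)) (v : X),
      Integrable (fun x => ρ x * g v x) (volume : Measure Torus3) := by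
    intro ρ v
    have h1 := L2.integrable_inner (𝕜 := ℝ) ρ ((hgmem v).toLp _)
    refine h1.congr ?_
    filter_upwards [MemLp.coeFn_toLp (hgmem v)] with x hx
    simp [RCLike.inner_apply, hx, mul_comm]
  -- lower bound for the mass operators
  have hMlow : ∀ (M : X →L[ℝ] X) (ρ : Lp ℝ 2 (volume : Measure Torus3)),
      (∀ᵐ x ∂(volume : Measure Torus3), κ ≤ ρ x) →
      (∀ v w : X, ⟪M v, w⟫ =
        ∫ x, ρ x * ⟪(⇑(v : L2V)) x, (⇑(w : L2V)) x⟫ ∂(volume : Measure Torus3)) →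
      ∀ v : X, κ * ‖v‖ ^ 2 ≤ ⟪M v, v⟫ := by
    intro M ρ hρ hM v
    have h1 : ‖v‖ ^ 2 = ∫ x, g v x ∂(volume : Measure Torus3) := by
      rw [← real_inner_self_eq_norm_sq, Submodule.coe_inner, L2.inner_def]
    rw [hM v v, h1, ← integral_const_mul]
    refine integral_mono_ae ((hgint v).const_mul κ) (hρg ρ v) ?_
    filter_upwards [hρ] with x hx
    exact mul_le_mul_of_nonneg_right hx real_inner_self_nonneg
  -- quantitative bound on the difference of mass operators (diagonal)
  have hbound : ∀ v : X, ‖v‖ = 1 → |⟪M₁ v, v⟫ - ⟪M₂ v, v⟫| ≤ CX * ‖ρ₁ - ρ₂‖ := by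
    intro v hv
    have hvL : ‖(v : L2V)‖ = 1 := hv
    rw [hM₁ v v, hM₂ v v]
    have h1 : (∫ x, ρ₁ x * g v x ∂(volume : Measure Torus3)) -
        (∫ x, ρ₂ x * g v x ∂(volume : Measure Torus3)) =
        ∫ x, ((ρ₁ - ρ₂) x) * g v x ∂(volume : Measure Torus3) := by
      rw [← integral_sub (hρg ρ₁ v) (hρg ρ₂ v)]
      refine integral_congr_ae ?_
      filter_upwards [Lp.coeFn_sub ρ₁ ρ₂] with x hx
      simp only [hx, Pi.sub_apply]
      ring
    have h2 : (∫ x, ((ρ₁ - ρ₂) x) * g v x ∂(volume : Measure Torus3)) =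
        (inner ℝ (ρ₁ - ρ₂) ((hgmem v).toLp _) : ℝ) := by
      rw [L2.inner_def]
      refine integral_congr_ae ?_
      filter_upwards [MemLp.coeFn_toLp (hgmem v)] with x hx
      simp [RCLike.inner_apply, hx, mul_comm]
    have h3 : ‖(hgmem v).toLp _‖ ≤ CX := by
      rw [Lp.norm_toLp]
      have hb := eLpNorm_le_mul_eLpNorm_of_ae_le_mul (hgae v) 2
      have hfin : ENNReal.ofReal ((eLpNorm (⇑(v : L2V)) ∞ (volume : Measure Torus3)).toReal) *
          eLpNorm (⇑(v : L2V)) 2 (volume : Measure Torus3) ≠ ⊤ :=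
        ENNReal.mul_ne_top ENNReal.ofReal_ne_top (Lp.eLpNorm_ne_top (v : L2V))
      calc (eLpNorm (g v) 2 (volume : Measure Torus3)).toReal
          ≤ (ENNReal.ofReal ((eLpNorm (⇑(v : L2V)) ∞ (volume : Measure Torus3)).toReal) *
              eLpNorm (⇑(v : L2V)) 2 (volume : Measure Torus3)).toReal :=
            ENNReal.toReal_mono hfin hb
        _ = (eLpNorm (⇑(v : L2V)) ∞ (volume : Measure Torus3)).toReal * ‖(v : L2V)‖ := by
            rw [ENNReal.toReal_mul, ENNReal.toReal_ofReal ENNReal.toReal_nonneg, Lp.norm_def]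
        _ = (eLpNorm (⇑(v : L2V)) ∞ (volume : Measure Torus3)).toReal := by rw [hvL, mul_one]
        _ ≤ CX * ‖v‖ := hCX v
        _ = CX := by rw [hv, mul_one]
    calc |(∫ x, ρ₁ x * g v x ∂(volume : Measure Torus3)) -
        (∫ x, ρ₂ x * g v x ∂(volume : Measure Torus3))|
        = |(inner ℝ (ρ₁ - ρ₂) ((hgmem v).toLp _) : ℝ)| := by rw [h1, h2]
      _ ≤ ‖ρ₁ - ρ₂‖ * ‖(hgmem v).toLp _‖ := abs_real_inner_le_norm _ _
      _ ≤ ‖ρ₁ - ρ₂‖ * CX := mul_le_mul_of_nonneg_left h3 (norm_nonneg _)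
      _ = CX * ‖ρ₁ - ρ₂‖ := mul_comm _ _
  -- lower bounds for the square roots
  have hl₁ : ∀ v : X, Real.sqrt κ * ‖v‖ ^ 2 ≤ ⟪S₁ v, v⟫ := by
    refine sqrt_lower_bound S₁ hs₁ hp₁ κ fun v => ?_
    have h1 : S₁ (S₁ v) = M₁ v := by rw [← hsq₁]; rfl
    rw [h1]
    exact hMlow M₁ ρ₁ hρ₁ hM₁ v
  have hl₂ : ∀ v : X, Real.sqrt κ * ‖v‖ ^ 2 ≤ ⟪S₂ v, v⟫ := by
    refine sqrt_lower_bound S₂ hs₂ hp₂ κ fun v => ?_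
    have h1 : S₂ (S₂ v) = M₂ v := by rw [← hsq₂]; rfl
    rw [h1]
    exact hMlow M₂ ρ₂ hρ₂ hM₂ v
  have hfinal := sqrt_diff_opnorm S₁ S₂ hs₁ hs₂ (Real.sqrt κ) (CX * ‖ρ₁ - ρ₂‖) hcpos
    (by positivity) hl₁ hl₂ (fun v hv => by
      have e1 : S₁ (S₁ v) = M₁ v := by rw [← hsq₁]; rfl
      have e2 : S₂ (S₂ v) = M₂ v := by rw [← hsq₂]; rfl
      rw [e1, e2]
      exact hbound v hv)
  calc ‖S₁ - S₂‖ ≤ CX * ‖ρ₁ - ρ₂‖ / (2 * Real.sqrt κ) := hfinal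
    _ = CX / (2 * Real.sqrt κ) * ‖ρ₁ - ρ₂‖ := by ring
end
end

section
/- Let (X, 𝒜, μ) be a finite measure space, q ∈ (1, ∞) with conjugate exponent q' = q/(q−1), and let F : [0, ∞) → [0, ∞) be continuous and nondecreasing with F(z) ≤ c(1 + z^{q−1}) for some constant c. Let (u_n) be nonnegative functions in L^q(μ), u ∈ L^q(μ) and v ∈ L^{q'}(μ) such that: (i) ∫ u_n φ dμ → ∫ u φ dμ for every φ ∈ L^{q'}(μ); (ii) ∫ F(u_n) ψ dμ → ∫ v ψ dμ for every ψ ∈ L^q(μ); and (iii) limsup_{n→∞} ∫ F(u_n) u_n dμ ≤ ∫ v u dμ. Then v = F(u) μ-almost everywhere. -/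
open MeasureTheory Filter
open scoped ENNReal

set_option maxHeartbeats 2000000 in
/-- **Minty trick.** Let `(X, 𝒜, μ)` be a finite measure space,
`q ∈ (1, ∞)` with conjugate exponent `q' = q/(q−1)`, and `F : [0,∞) → [0,∞)` continuous and
nondecreasing with `F(z) ≤ c(1 + z^{q−1})`.  Let `(u_n)` be nonnegative functions in
`L^q(μ)`, `u ∈ L^q(μ)` and `v ∈ L^{q'}(μ)` such that (i) `∫ u_n φ → ∫ u φ` for every
`φ ∈ L^{q'}(μ)`; (ii) `∫ F(u_n) ψ → ∫ v ψ` for every `ψ ∈ L^q(μ)`; and (iii)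
`limsup_n ∫ F(u_n) u_n ≤ ∫ v u`.  Then `v = F(u)` `μ`-a.e. -/
theorem stmt_13 {X : Type*} [MeasurableSpace X] (μ : Measure X) [IsFiniteMeasure μ]
    (q : ℝ) (hq : 1 < q) (c : ℝ)
    (F : ℝ → ℝ)
    (hFcont : ContinuousOn F (Set.Ici 0))
    (hFmono : MonotoneOn F (Set.Ici 0))
    (hFnonneg : ∀ z : ℝ, 0 ≤ z → 0 ≤ F z)
    (hFgrowth : ∀ z : ℝ, 0 ≤ z → F z ≤ c * (1 + z ^ (q - 1)))
    (u : ℕ → X → ℝ) (hu : ∀ n, MemLp (u n) (ENNReal.ofReal q) μ)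
    (hu0 : ∀ n x, 0 ≤ u n x)
    (ulim : X → ℝ) (hulim : MemLp ulim (ENNReal.ofReal q) μ)
    (v : X → ℝ) (hv : MemLp v (ENNReal.ofReal (q / (q - 1))) μ)
    (h1 : ∀ φ : X → ℝ, MemLp φ (ENNReal.ofReal (q / (q - 1))) μ →
      Tendsto (fun n => ∫ x, u n x * φ x ∂μ) atTop (nhds (∫ x, ulim x * φ x ∂μ)))
    (h2 : ∀ ψ : X → ℝ, MemLp ψ (ENNReal.ofReal q) μ →
      Tendsto (fun n => ∫ x, F (u n x) * ψ x ∂μ) atTop (nhds (∫ x, v x * ψ x ∂μ)))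
    (h3 : limsup (fun n => ∫ x, F (u n x) * u n x ∂μ) atTop ≤ ∫ x, v x * ulim x ∂μ) :
    ∀ᵐ x ∂μ, v x = F (ulim x) := by
  -- basic exponent facts
  have hq0 : (0:ℝ) < q := lt_trans one_pos hq
  have hq1 : (0:ℝ) < q - 1 := by linarith
  set q' : ℝ := q / (q - 1) with hq'def
  have hq'0 : 0 < q' := div_pos hq0 hq1
  have hq'1 : 1 < q' := by rw [hq'def, lt_div_iff₀ hq1]; linarith
  have hconj : 1 / q + 1 / q' = 1 := by rw [hq'def]; field_simp; ring
  have hqq' : (q - 1) * q' = q := by rw [hq'def]; field_simp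
  set p : ℝ≥0∞ := ENNReal.ofReal q with hpdef
  set p' : ℝ≥0∞ := ENNReal.ofReal q' with hp'def
  have hp_ne_zero : p ≠ 0 := by
    simp [hpdef, ENNReal.ofReal_eq_zero, not_le, hq0]
  have hp_ne_top : p ≠ ∞ := ENNReal.ofReal_ne_top
  have hp'_ne_zero : p' ≠ 0 := by
    simp [hp'def, ENNReal.ofReal_eq_zero, not_le, hq'0]
  have hp'_ne_top : p' ≠ ∞ := ENNReal.ofReal_ne_top
  have hp_toReal : p.toReal = q := ENNReal.toReal_ofReal hq0.le
  have hp'_toReal : p'.toReal = q' := ENNReal.toReal_ofReal hq'0.le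
  have hp_one_le : 1 ≤ p := by
    rw [hpdef, ← ENNReal.ofReal_one]; exact ENNReal.ofReal_le_ofReal hq.le
  have hp'_one_le : 1 ≤ p' := by
    rw [hp'def, ← ENNReal.ofReal_one]; exact ENNReal.ofReal_le_ofReal hq'1.le
  have hsum1 : (1:ℝ≥0∞) / 1 = 1 / p' + 1 / p := by
    have e1 : (1:ℝ≥0∞) / p = ENNReal.ofReal (1 / q) := by
      rw [hpdef, ENNReal.ofReal_div_of_pos hq0, ENNReal.ofReal_one]
    have e2 : (1:ℝ≥0∞) / p' = ENNReal.ofReal (1 / q') := by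
      rw [hp'def, ENNReal.ofReal_div_of_pos hq'0, ENNReal.ofReal_one]
    rw [e1, e2, ← ENNReal.ofReal_add (by positivity) (by positivity),
      show 1 / q' + 1 / q = 1 by linarith, ENNReal.ofReal_one]
    simp
  haveI hH : ENNReal.HolderTriple p' p 1 := ⟨by simpa only [one_div] using hsum1.symm⟩
  -- product of an L^{p'} and an L^p function is integrable
  have hmul : ∀ {f g : X → ℝ}, MemLp f p' μ → MemLp g p μ →
      Integrable (fun x => f x * g x) μ := by
    intro f g hf hg
    rw [← memLp_one_iff_integrable]
    exact hg.smul hf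
  have hmul' : ∀ {f g : X → ℝ}, MemLp f p μ → MemLp g p' μ →
      Integrable (fun x => f x * g x) μ := by
    intro f g hf hg
    have := hmul hg hf
    rwa [show (fun x => g x * f x) = fun x => f x * g x from funext fun x => mul_comm _ _] at this
  -- a continuous extension of F
  set G : ℝ → ℝ := fun z => F (max z 0) with hGdef
  have hGcont : Continuous G :=
    hFcont.comp_continuous (continuous_id.max continuous_const) fun x => Set.mem_Ici.2 (le_max_right _ _)
  have hFw_meas : ∀ {w : X → ℝ}, (∀ x, 0 ≤ w x) → AEStronglyMeasurable w μ →
      AEStronglyMeasurable (fun x => F (w x)) μ := by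
    intro w hw0 hw
    have : (fun x => F (w x)) = fun x => G (w x) := by
      funext x; rw [hGdef]; simp [max_eq_left (hw0 x)]
    rw [this]
    exact hGcont.comp_aestronglyMeasurable hw
  have hc0 : 0 ≤ c := by
    have h0 := hFnonneg 0 le_rfl
    have h1' := hFgrowth 0 le_rfl
    rw [Real.zero_rpow (by linarith : q - 1 ≠ 0)] at h1'
    linarith
  -- rpow of exponent q-1 maps L^p to L^{p'}
  have hrpow_mem : ∀ {w : X → ℝ}, (∀ x, 0 ≤ w x) → MemLp w p μ →
      MemLp (fun x => w x ^ (q - 1)) p' μ := by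
    intro w hw0 hw
    have h := hw.norm_rpow_div (ENNReal.ofReal (q - 1))
    have htr : (ENNReal.ofReal (q - 1)).toReal = q - 1 := ENNReal.toReal_ofReal hq1.le
    rw [htr] at h
    have hdiv : p / ENNReal.ofReal (q - 1) = p' := by
      rw [hpdef, hp'def, hq'def, ENNReal.ofReal_div_of_pos hq1]
    rw [hdiv] at h
    have : (fun x : X => ‖w x‖ ^ (q - 1)) = fun x => w x ^ (q - 1) := by
      funext x; rw [Real.norm_eq_abs, abs_of_nonneg (hw0 x)]
    rwa [this] at h
  -- F ∘ w is in L^{p'} for nonnegative w ∈ L^p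
  have hFw_mem : ∀ {w : X → ℝ}, (∀ x, 0 ≤ w x) → MemLp w p μ →
      MemLp (fun x => F (w x)) p' μ := by
    intro w hw0 hw
    have hg : MemLp (fun x => c * (1 + w x ^ (q - 1))) p' μ :=
      ((memLp_const (1:ℝ)).add (hrpow_mem hw0 hw)).const_mul c
    refine hg.of_le (hFw_meas hw0 hw.1) (ae_of_all _ fun x => ?_)
    rw [Real.norm_eq_abs, abs_of_nonneg (hFnonneg _ (hw0 x))]
    exact (hFgrowth _ (hw0 x)).trans (le_abs_self _)
  have huInt : ∀ n, Integrable (u n) μ := fun n => (hu n).integrable hp_one_le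
  have hvInt : Integrable v μ := hv.integrable hp'_one_le
  -- rpow identities
  have hid : ∀ t : ℝ, 0 ≤ t → t * t ^ (q - 1) = t ^ q := by
    intro t ht
    rcases eq_or_lt_of_le ht with h | h
    · rw [← h, Real.zero_rpow (by linarith : q - 1 ≠ 0),
        Real.zero_rpow hq0.ne', mul_zero]
    · have e : t ^ (1:ℝ) * t ^ (q - 1) = t ^ (1 + (q - 1)) := (Real.rpow_add h 1 (q - 1)).symm
      rw [Real.rpow_one] at e
      rw [e]
      congr 1
      ring
  have hle1 : ∀ t : ℝ, 0 ≤ t → t ≤ 1 + t ^ q := by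
    intro t ht
    rcases le_total t 1 with h | h
    · have : (0:ℝ) ≤ t ^ q := Real.rpow_nonneg ht q
      linarith
    · have h2' : t ^ (1:ℝ) ≤ t ^ q := Real.rpow_le_rpow_of_exponent_le h hq.le
      rw [Real.rpow_one] at h2'
      linarith
  -- ### Banach–Steinhaus: the L^p norms of the u n are uniformly bounded
  haveI hfact : Fact (1 ≤ p') := ⟨hp'_one_le⟩
  have hmulc : ∀ (n : ℕ) (φ : Lp ℝ p' μ), Integrable (fun x => u n x * φ x) μ :=
    fun n φ => hmul' (hu n) (Lp.memLp φ)
  have hbound : ∀ (n : ℕ) (φ : Lp ℝ p' μ),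
      ‖∫ x, u n x * φ x ∂μ‖ ≤ (eLpNorm (u n) p μ).toReal * ‖φ‖ := by
    intro n φ
    have hint := hmulc n φ
    calc ‖∫ x, u n x * φ x ∂μ‖ ≤ ∫ x, ‖u n x * φ x‖ ∂μ := norm_integral_le_integral_norm _
      _ = (eLpNorm (fun x => u n x * φ x) 1 μ).toReal := by
          rw [integral_norm_eq_lintegral_enorm hint.1, eLpNorm_one_eq_lintegral_enorm]
      _ ≤ ((eLpNorm (φ : X → ℝ) p' μ) * (eLpNorm (u n) p μ)).toReal := by
          apply ENNReal.toReal_mono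
          · exact ENNReal.mul_ne_top (Lp.eLpNorm_ne_top φ) (hu n).2.ne
          · have h := eLpNorm_smul_le_mul_eLpNorm (p := p') (q := p) (r := 1) (hu n).1
              (Lp.aestronglyMeasurable φ)
            have hh : (fun x => u n x * (φ : X → ℝ) x)
                = ((φ : X → ℝ) • (u n) : X → ℝ) := by
              funext x; simp [mul_comm]
            rw [hh]
            simpa using h
      _ = (eLpNorm (u n) p μ).toReal * ‖φ‖ := by
          rw [ENNReal.toReal_mul, Lp.norm_def, mul_comm]
  let T : ℕ → Lp ℝ p' μ →L[ℝ] ℝ := fun n =>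
    LinearMap.mkContinuous
      { toFun := fun φ => ∫ x, u n x * φ x ∂μ
        map_add' := by
          intro φ ψ
          show (∫ x, u n x * ((φ + ψ : Lp ℝ p' μ) : X → ℝ) x ∂μ)
            = (∫ x, u n x * (φ : X → ℝ) x ∂μ) + ∫ x, u n x * (ψ : X → ℝ) x ∂μ
          have hae : (fun x => u n x * ((φ + ψ : Lp ℝ p' μ) : X → ℝ) x)
              =ᵐ[μ] fun x => u n x * φ x + u n x * ψ x := by
            filter_upwards [Lp.coeFn_add φ ψ] with x hx
            rw [hx]; simp [Pi.add_apply]; ring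
          rw [integral_congr_ae hae, integral_add (hmulc n φ) (hmulc n ψ)]
        map_smul' := by
          intro a φ
          show (∫ x, u n x * ((a • φ : Lp ℝ p' μ) : X → ℝ) x ∂μ)
            = a • ∫ x, u n x * (φ : X → ℝ) x ∂μ
          have hae : (fun x => u n x * ((a • φ : Lp ℝ p' μ) : X → ℝ) x)
              =ᵐ[μ] fun x => a * (u n x * φ x) := by
            filter_upwards [Lp.coeFn_smul a φ] with x hx
            rw [hx]; simp [Pi.smul_apply, smul_eq_mul]; ring
          rw [integral_congr_ae hae, integral_const_mul]
          simp }
      ((eLpNorm (u n) p μ).toReal) (fun φ => hbound n φ)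
  have hTapp : ∀ (n : ℕ) (φ : Lp ℝ p' μ), T n φ = ∫ x, u n x * φ x ∂μ := fun n φ => rfl
  have hptw : ∀ φ : Lp ℝ p' μ, ∃ C, ∀ n, ‖T n φ‖ ≤ C := by
    intro φ
    have ht := (h1 (φ : X → ℝ) (Lp.memLp φ)).norm
    obtain ⟨C, hC⟩ := ht.bddAbove_range
    refine ⟨C, fun n => ?_⟩
    rw [hTapp]
    exact hC (Set.mem_range_self n)
  obtain ⟨C', hC'⟩ := banach_steinhaus hptw
  have hC'0 : 0 ≤ C' := le_trans (norm_nonneg _) (hC' 0)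
  -- the quantities a n = ∫ u n ^ q are uniformly bounded
  set a : ℕ → ℝ := fun n => ∫ x, u n x ^ q ∂μ with hadef
  have ha_nonneg : ∀ n, 0 ≤ a n :=
    fun n => integral_nonneg fun x => Real.rpow_nonneg (hu0 n x) q
  have huq_int : ∀ n, Integrable (fun x => u n x ^ q) μ := by
    intro n
    have h := ((hu n).norm_rpow hp_ne_zero hp_ne_top)
    rw [hp_toReal] at h
    have : (fun x : X => ‖u n x‖ ^ q) = fun x => u n x ^ q := by
      funext x; rw [Real.norm_eq_abs, abs_of_nonneg (hu0 n x)]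
    rw [this] at h
    exact memLp_one_iff_integrable.1 h
  have hKa : ∃ Ka : ℝ, 0 ≤ Ka ∧ ∀ n, a n ≤ Ka := by
    refine ⟨max 1 (C' ^ q), le_trans zero_le_one (le_max_left _ _), fun n => ?_⟩
    rcases le_total (a n) 1 with h | h
    · exact h.trans (le_max_left _ _)
    · -- a n ≥ 1; use the functional bound
      have ha_pos : 0 < a n := lt_of_lt_of_le one_pos h
      set ψ : X → ℝ := fun x => u n x ^ (q - 1) with hψdef
      have hψmem : MemLp ψ p' μ := hrpow_mem (hu0 n) (hu n)
      have hψnorm : ‖hψmem.toLp ψ‖ = (a n) ^ q'⁻¹ := by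
        rw [Lp.norm_toLp]
        rw [hψmem.eLpNorm_eq_integral_rpow_norm hp'_ne_zero hp'_ne_top]
        rw [hp'_toReal]
        have hps : (fun x : X => ‖ψ x‖ ^ q') = fun x => u n x ^ q := by
          funext x
          rw [Real.norm_eq_abs, hψdef, abs_of_nonneg (Real.rpow_nonneg (hu0 n x) _),
            ← Real.rpow_mul (hu0 n x), hqq']
        rw [hps]
        exact ENNReal.toReal_ofReal (Real.rpow_nonneg (ha_nonneg n) _)
      have hTψ : T n (hψmem.toLp ψ) = a n := by
        rw [hTapp]
        have hae : (fun x => u n x * (hψmem.toLp ψ : X → ℝ) x)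
            =ᵐ[μ] fun x => u n x ^ q := by
          filter_upwards [hψmem.coeFn_toLp] with x hx
          rw [hx, hψdef]
          exact hid _ (hu0 n x)
        rw [integral_congr_ae hae]
      have hkey : a n ≤ C' * (a n) ^ q'⁻¹ := by
        calc a n = T n (hψmem.toLp ψ) := hTψ.symm
          _ ≤ ‖T n (hψmem.toLp ψ)‖ := le_abs_self _
          _ ≤ ‖T n‖ * ‖hψmem.toLp ψ‖ := (T n).le_opNorm _
          _ ≤ C' * (a n) ^ q'⁻¹ := by
              rw [hψnorm]
              exact mul_le_mul_of_nonneg_right (hC' n) (Real.rpow_nonneg (ha_nonneg n) _)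
      have hsplit : a n = (a n) ^ q'⁻¹ * (a n) ^ q⁻¹ := by
        rw [← Real.rpow_add ha_pos, show q'⁻¹ + q⁻¹ = 1 by
          rw [inv_eq_one_div, inv_eq_one_div]; linarith [hconj], Real.rpow_one]
      have hfac : (0:ℝ) < (a n) ^ q'⁻¹ := Real.rpow_pos_of_pos ha_pos _
      have h2' : (a n) ^ q⁻¹ ≤ C' := by
        have hk2 := hkey
        rw [hsplit] at hk2
        nlinarith [hfac]
      have hfin : a n ≤ C' ^ q := by
        have h3' : ((a n) ^ q⁻¹) ^ q ≤ C' ^ q :=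
          Real.rpow_le_rpow (Real.rpow_nonneg (ha_nonneg n) _) h2' hq0.le
        rwa [← Real.rpow_mul (ha_nonneg n), inv_mul_cancel₀ hq0.ne', Real.rpow_one] at h3'
      exact hfin.trans (le_max_right _ _)
  obtain ⟨Ka, hKa0, hKa⟩ := hKa
  -- the sequence A n = ∫ F(u n) * u n is uniformly bounded above
  set A : ℕ → ℝ := fun n => ∫ x, F (u n x) * u n x ∂μ with hAdef
  have hAle : ∀ n, A n ≤ c * ((μ Set.univ).toReal + 2 * Ka) := by
    intro n
    have hFun_mem : MemLp (fun x => F (u n x)) p' μ := hFw_mem (hu0 n) (hu n)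
    have hint1 : Integrable (fun x => F (u n x) * u n x) μ := hmul hFun_mem (hu n)
    have hint2 : Integrable (fun x => c * (u n x + u n x ^ q)) μ :=
      ((huInt n).add (huq_int n)).const_mul c
    have hptw' : ∀ x, F (u n x) * u n x ≤ c * (u n x + u n x ^ q) := by
      intro x
      have hb1 : F (u n x) * u n x ≤ (c * (1 + u n x ^ (q-1))) * u n x :=
        mul_le_mul_of_nonneg_right (hFgrowth _ (hu0 n x)) (hu0 n x)
      have hb2 : u n x * u n x ^ (q-1) = u n x ^ q := hid _ (hu0 n x)
      nlinarith [hb1, hb2]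
    have hAle1 : A n ≤ c * (∫ x, u n x ∂μ + a n) := by
      rw [hAdef]
      calc ∫ x, F (u n x) * u n x ∂μ ≤ ∫ x, c * (u n x + u n x ^ q) ∂μ :=
            integral_mono hint1 hint2 hptw'
        _ = c * (∫ x, u n x ∂μ + a n) := by
            rw [integral_const_mul, integral_add (huInt n) (huq_int n)]
    have hb : ∫ x, u n x ∂μ ≤ (μ Set.univ).toReal + a n := by
      calc ∫ x, u n x ∂μ ≤ ∫ x, (1 + u n x ^ q) ∂μ :=
            integral_mono (huInt n) ((integrable_const 1).add (huq_int n))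
              (fun x => hle1 _ (hu0 n x))
        _ = (μ Set.univ).toReal + a n := by
            rw [integral_add (integrable_const 1) (huq_int n)]
            simp; rfl
    nlinarith [hKa n, mul_le_mul_of_nonneg_left
      (add_le_add hb (hKa n : a n ≤ Ka)) hc0, hAle1, hc0, hKa n]
  have hAbdd : IsBoundedUnder (· ≤ ·) atTop A :=
    isBoundedUnder_of ⟨c * ((μ Set.univ).toReal + 2 * Ka), hAle⟩
  -- ### The key Minty inequality
  have keyineq : ∀ w : X → ℝ, (∀ x, 0 ≤ w x) → MemLp w p μ →
      0 ≤ ∫ x, (v x - F (w x)) * (ulim x - w x) ∂μ := by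
    intro w hw0 hw
    have hFw : MemLp (fun x => F (w x)) p' μ := hFw_mem hw0 hw
    -- integrability of the four products
    have I1 : Integrable (fun x => v x * ulim x) μ := hmul hv hulim
    have I2 : Integrable (fun x => v x * w x) μ := hmul hv hw
    have I3 : Integrable (fun x => F (w x) * ulim x) μ := hmul hFw hulim
    have I4 : Integrable (fun x => F (w x) * w x) μ := hmul hFw hw
    have I12 : Integrable (fun x => v x * ulim x - v x * w x) μ := I1.sub I2
    have I123 : Integrable
        (fun x => v x * ulim x - v x * w x - F (w x) * ulim x) μ := I12.sub I3
    -- n-th inequality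
    have step : ∀ n, (∫ x, F (u n x) * w x ∂μ) + (∫ x, u n x * F (w x) ∂μ)
        - (∫ x, F (w x) * w x ∂μ) ≤ A n := by
      intro n
      have hFun_mem : MemLp (fun x => F (u n x)) p' μ := hFw_mem (hu0 n) (hu n)
      have J1 : Integrable (fun x => F (u n x) * u n x) μ := hmul hFun_mem (hu n)
      have J2 : Integrable (fun x => F (u n x) * w x) μ := hmul hFun_mem hw
      have J3 : Integrable (fun x => u n x * F (w x)) μ := hmul' (hu n) hFw
      have J12 : Integrable (fun x => F (u n x) * u n x - F (u n x) * w x) μ := J1.sub J2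
      have J123 : Integrable
          (fun x => F (u n x) * u n x - F (u n x) * w x - u n x * F (w x)) μ := J12.sub J3
      have hpt : ∀ x, 0 ≤ (F (u n x) - F (w x)) * (u n x - w x) := by
        intro x
        rcases le_total (u n x) (w x) with h | h
        · have := hFmono (Set.mem_Ici.2 (hu0 n x)) (Set.mem_Ici.2 (hw0 x)) h
          nlinarith
        · have := hFmono (Set.mem_Ici.2 (hw0 x)) (Set.mem_Ici.2 (hu0 n x)) h
          nlinarith
      have h0 : 0 ≤ ∫ x, (F (u n x) - F (w x)) * (u n x - w x) ∂μ :=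
        integral_nonneg hpt
      have hexp : (fun x => (F (u n x) - F (w x)) * (u n x - w x))
          = fun x => F (u n x) * u n x - F (u n x) * w x - u n x * F (w x)
            + F (w x) * w x := by
        funext x; ring
      rw [hexp, integral_add J123 I4, integral_sub J12 J3, integral_sub J1 J2] at h0
      rw [hAdef]
      linarith
    -- pass to the limit
    have htend : Tendsto (fun n => (∫ x, F (u n x) * w x ∂μ)
        + (∫ x, u n x * F (w x) ∂μ) - (∫ x, F (w x) * w x ∂μ)) atTop
        (nhds ((∫ x, v x * w x ∂μ) + (∫ x, ulim x * F (w x) ∂μ)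
          - (∫ x, F (w x) * w x ∂μ))) :=
      ((h2 w hw).add (h1 (fun x => F (w x)) hFw)).sub tendsto_const_nhds
    have hLle : (∫ x, v x * w x ∂μ) + (∫ x, ulim x * F (w x) ∂μ)
        - (∫ x, F (w x) * w x ∂μ) ≤ ∫ x, v x * ulim x ∂μ := by
      have hls : limsup (fun n => (∫ x, F (u n x) * w x ∂μ)
          + (∫ x, u n x * F (w x) ∂μ) - (∫ x, F (w x) * w x ∂μ)) atTop
          ≤ limsup A atTop :=
        limsup_le_limsup (Eventually.of_forall step) htend.isCoboundedUnder_le hAbdd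
      rw [htend.limsup_eq] at hls
      exact hls.trans h3
    have hcomm : ∫ x, ulim x * F (w x) ∂μ = ∫ x, F (w x) * ulim x ∂μ := by
      congr 1; funext x; ring
    have hexp2 : (fun x => (v x - F (w x)) * (ulim x - w x))
        = fun x => v x * ulim x - v x * w x - F (w x) * ulim x + F (w x) * w x := by
      funext x; ring
    rw [hexp2, integral_add I123 I4, integral_sub I12 I3, integral_sub I1 I2]
    rw [hcomm] at hLle
    linarith
  -- ### nonnegativity of the weak limit
  have hulim0 : 0 ≤ᵐ[μ] ulim := by
    apply ae_nonneg_of_forall_setIntegral_nonneg (hulim.integrable hp_one_le)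
    intro s hs _
    set φ : X → ℝ := s.indicator (fun _ => (1:ℝ)) with hφdef
    have hφmem : MemLp φ p' μ := (memLp_const (1:ℝ)).indicator hs
    have hφ0 : ∀ x, 0 ≤ φ x := fun x => Set.indicator_nonneg (fun _ _ => zero_le_one) x
    have hlim := h1 φ hφmem
    have hn : ∀ n, (0:ℝ) ≤ ∫ x, u n x * φ x ∂μ :=
      fun n => integral_nonneg fun x => mul_nonneg (hu0 n x) (hφ0 x)
    have h0 : (0:ℝ) ≤ ∫ x, ulim x * φ x ∂μ := ge_of_tendsto' hlim hn
    have heq : (fun x => ulim x * φ x) = s.indicator ulim := by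
      funext x
      by_cases hxs : x ∈ s
      · simp [hφdef, Set.indicator_of_mem hxs]
      · simp [hφdef, Set.indicator_of_notMem hxs]
    rwa [heq, integral_indicator hs] at h0
  -- v >= F 0 a.e.
  have hvF0 : ∀ᵐ x ∂μ, F 0 ≤ v x := by
    have h := ae_nonneg_of_forall_setIntegral_nonneg (f := fun x => v x - F 0)
      (hvInt.sub (integrable_const (F 0))) ?_
    · filter_upwards [h] with x hx
      simp only [Pi.zero_apply] at hx
      linarith
    intro s hs _
    set ψ : X → ℝ := s.indicator (fun _ => (1:ℝ)) with hψdef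
    have hψmem : MemLp ψ p μ := (memLp_const (1:ℝ)).indicator hs
    have hψ0 : ∀ x, 0 ≤ ψ x := fun x => Set.indicator_nonneg (fun _ _ => zero_le_one) x
    have hψint : Integrable ψ μ := hψmem.integrable hp_one_le
    have hlim := h2 ψ hψmem
    have hn : ∀ n, F 0 * (μ s).toReal ≤ ∫ x, F (u n x) * ψ x ∂μ := by
      intro n
      have hFn_mem : MemLp (fun x => F (u n x)) p' μ := hFw_mem (hu0 n) (hu n)
      have hint : Integrable (fun x => F (u n x) * ψ x) μ := hmul hFn_mem hψmem
      have hmono : ∫ x, F 0 * ψ x ∂μ ≤ ∫ x, F (u n x) * ψ x ∂μ := by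
        apply integral_mono (hψint.const_mul (F 0)) hint
        intro x
        exact mul_le_mul_of_nonneg_right
          (hFmono (Set.mem_Ici.2 le_rfl) (Set.mem_Ici.2 (hu0 n x)) (hu0 n x)) (hψ0 x)
      calc F 0 * (μ s).toReal = ∫ x, F 0 * ψ x ∂μ := by
            rw [integral_const_mul, hψdef, integral_indicator_const _ hs]
            simp [mul_comm]; exact Or.inl rfl
        _ ≤ _ := hmono
    have h0 : F 0 * (μ s).toReal ≤ ∫ x, v x * ψ x ∂μ := ge_of_tendsto' hlim hn
    have heq : (fun x => v x * ψ x) = s.indicator v := by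
      funext x
      by_cases hxs : x ∈ s
      · simp [hψdef, Set.indicator_of_mem hxs]
      · simp [hψdef, Set.indicator_of_notMem hxs]
    rw [heq, integral_indicator hs] at h0
    rw [integral_sub hvInt.integrableOn (integrableOn_const (measure_lt_top μ s).ne)]
    rw [setIntegral_const]
    simp only [smul_eq_mul]
    rw [show μ.real s = (μ s).toReal from rfl]
    linarith
  -- positive part of ulim
  set g : X → ℝ := fun x => max (ulim x) 0 with hgdef
  have hg0 : ∀ x, 0 ≤ g x := fun x => le_max_right _ _
  have hposmem : ∀ {h : X → ℝ}, MemLp h p μ → MemLp (fun x => max (h x) 0) p μ := by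
    intro h hh
    refine hh.of_le ((continuous_id.max continuous_const).comp_aestronglyMeasurable hh.1)
      (ae_of_all _ fun x => ?_)
    rw [Real.norm_eq_abs, abs_of_nonneg (le_max_right _ _), Real.norm_eq_abs]
    exact max_le (le_abs_self _) (abs_nonneg _)
  have hgmem : MemLp g p μ := hposmem hulim
  have hgae : g =ᵐ[μ] ulim := by
    filter_upwards [hulim0] with x hx
    rw [hgdef]; exact max_eq_left hx
  -- upper bound: v ≤ F (g + t) a.e. for each t = 1/(k+1)
  have hup : ∀ k : ℕ, ∀ᵐ x ∂μ, v x ≤ F (g x + 1 / ((k:ℝ) + 1)) := by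
    intro k
    set t : ℝ := 1 / ((k:ℝ) + 1) with htdef
    have htpos : 0 < t := by positivity
    have hgt_mem : MemLp (fun x => g x + t) p μ := hgmem.add (memLp_const t)
    have hgt0 : ∀ x, 0 ≤ g x + t := fun x => by positivity
    have hFgt_mem : MemLp (fun x => F (g x + t)) p' μ := hFw_mem hgt0 hgt_mem
    have key' : ∀ A' : Set X, MeasurableSet A' → 0 ≤ ∫ x in A', (F (g x + t) - v x) ∂μ := by
      intro A' hA
      set w : X → ℝ := fun x => g x + A'.indicator (fun _ => t) x with hwdef
      have hw0 : ∀ x, 0 ≤ w x := fun x =>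
        add_nonneg (hg0 x) (Set.indicator_nonneg (fun _ _ => htpos.le) x)
      have hwmem : MemLp w p μ := hgmem.add ((memLp_const t).indicator hA)
      have h0 := keyineq w hw0 hwmem
      have heq : (fun x => (v x - F (w x)) * (ulim x - w x))
          =ᵐ[μ] A'.indicator (fun x => t * (F (g x + t) - v x)) := by
        filter_upwards [hgae] with x hx
        by_cases hxA : x ∈ A'
        · have hwx : w x = g x + t := by
            rw [hwdef]; simp [Set.indicator_of_mem hxA]
          rw [hwx, Set.indicator_of_mem hxA, ← hx]
          ring
        · have hwx : w x = g x := by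
            rw [hwdef]; simp [Set.indicator_of_notMem hxA]
          rw [hwx, Set.indicator_of_notMem hxA, ← hx]
          ring
      rw [integral_congr_ae heq, integral_indicator hA, integral_const_mul] at h0
      nlinarith [h0]
    have h := ae_nonneg_of_forall_setIntegral_nonneg
      (f := fun x => F (g x + t) - v x)
      ((hFgt_mem.integrable hp'_one_le).sub hvInt)
      (fun s hs _ => key' s hs)
    filter_upwards [h] with x hx
    simp only [Pi.zero_apply] at hx
    linarith
  -- lower bound inequality a.e. for each t = 1/(k+1)
  have hdown : ∀ k : ℕ, ∀ᵐ x ∂μ,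
      0 ≤ (v x - F (max (g x - 1 / ((k:ℝ) + 1)) 0)) * min (g x) (1 / ((k:ℝ) + 1)) := by
    intro k
    set t : ℝ := 1 / ((k:ℝ) + 1) with htdef
    have htpos : 0 < t := by positivity
    have hgmt_mem : MemLp (fun x => max (g x - t) 0) p μ := hposmem (hgmem.sub (memLp_const t))
    have hFgmt_mem : MemLp (fun x => F (max (g x - t) 0)) p' μ :=
      hFw_mem (fun x => le_max_right _ _) hgmt_mem
    have hmin_mem : MemLp (fun x => min (g x) t) p μ := by
      refine (memLp_const t).of_le
        ((continuous_id.min continuous_const).comp_aestronglyMeasurable hgmem.1)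
        (ae_of_all _ fun x => ?_)
      rw [Real.norm_eq_abs, abs_of_nonneg (le_min (hg0 x) htpos.le), Real.norm_eq_abs,
        abs_of_nonneg htpos.le]
      exact min_le_right _ _
    have key' : ∀ A' : Set X, MeasurableSet A' →
        0 ≤ ∫ x in A', (v x - F (max (g x - t) 0)) * min (g x) t ∂μ := by
      intro A' hA
      set w : X → ℝ := fun x => max (g x - A'.indicator (fun _ => t) x) 0 with hwdef
      have hw0 : ∀ x, 0 ≤ w x := fun x => le_max_right _ _
      have hwmem : MemLp w p μ := hposmem (hgmem.sub ((memLp_const t).indicator hA))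
      have h0 := keyineq w hw0 hwmem
      have heq : (fun x => (v x - F (w x)) * (ulim x - w x))
          =ᵐ[μ] A'.indicator (fun x => (v x - F (max (g x - t) 0)) * min (g x) t) := by
        filter_upwards [hgae] with x hx
        by_cases hxA : x ∈ A'
        · have hwx : w x = max (g x - t) 0 := by
            rw [hwdef]; simp [Set.indicator_of_mem hxA]
          have hsub : ulim x - w x = min (g x) t := by
            rw [hwx, ← hx]
            rcases le_total (g x) t with h | h
            · rw [max_eq_right (by linarith : g x - t ≤ 0), min_eq_left h]; ring
            · rw [max_eq_left (by linarith : (0:ℝ) ≤ g x - t), min_eq_right h]; ring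
          rw [Set.indicator_of_mem hxA, hsub, hwx]
        · have hwx : w x = g x := by
            rw [hwdef]; simp [Set.indicator_of_notMem hxA, max_eq_left (hg0 x)]
          rw [Set.indicator_of_notMem hxA, hwx, ← hx]
          ring
      rw [integral_congr_ae heq, integral_indicator hA] at h0
      exact h0
    have h := ae_nonneg_of_forall_setIntegral_nonneg
      (f := fun x => (v x - F (max (g x - t) 0)) * min (g x) t)
      (hmul (hv.sub hFgmt_mem) hmin_mem)
      (fun s hs _ => key' s hs)
    filter_upwards [h] with x hx
    simpa using hx
  -- ### conclusion
  have hup' : ∀ᵐ x ∂μ, ∀ k : ℕ, v x ≤ F (g x + 1 / ((k:ℝ) + 1)) := ae_all_iff.2 hup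
  have hdown' : ∀ᵐ x ∂μ, ∀ k : ℕ,
      0 ≤ (v x - F (max (g x - 1 / ((k:ℝ) + 1)) 0)) * min (g x) (1 / ((k:ℝ) + 1)) :=
    ae_all_iff.2 hdown
  filter_upwards [hup', hdown', hvF0, hgae] with x hx1 hx2 hx3 hx4
  have hg0x : 0 ≤ g x := hg0 x
  -- upper: v x ≤ F (g x)
  have hseq0 : Tendsto (fun k : ℕ => g x + 1 / ((k:ℝ) + 1)) atTop (nhds (g x)) := by
    have h' : Tendsto (fun k : ℕ => g x + 1 / ((k:ℝ) + 1)) atTop (nhds (g x + 0)) :=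
      tendsto_const_nhds.add tendsto_one_div_add_atTop_nhds_zero_nat
    simpa using h'
  have hseq1 : Tendsto (fun k : ℕ => F (g x + 1 / ((k:ℝ) + 1))) atTop (nhds (F (g x))) := by
    refine (hFcont (g x) (Set.mem_Ici.2 hg0x)).tendsto.comp ?_
    refine tendsto_nhdsWithin_of_tendsto_nhds_of_eventually_within _ hseq0 ?_
    exact Eventually.of_forall fun k => Set.mem_Ici.2 (by positivity)
  have hle : v x ≤ F (g x) := ge_of_tendsto' hseq1 hx1
  -- lower: F (g x) ≤ v x
  have hge : F (g x) ≤ v x := by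
    rcases eq_or_lt_of_le hg0x with h | h
    · rw [← h]
      simpa using hx3
    · have hseq0' : Tendsto (fun k : ℕ => max (g x - 1 / ((k:ℝ) + 1)) 0) atTop
          (nhds (g x)) := by
        have h' : Tendsto (fun k : ℕ => max (g x - 1 / ((k:ℝ) + 1)) 0) atTop
            (nhds (max (g x - 0) 0)) :=
          (tendsto_const_nhds.sub tendsto_one_div_add_atTop_nhds_zero_nat).max
            tendsto_const_nhds
        simpa [max_eq_left hg0x] using h'
      have hseq2 : Tendsto (fun k : ℕ => F (max (g x - 1 / ((k:ℝ) + 1)) 0)) atTop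
          (nhds (F (g x))) := by
        refine (hFcont (g x) (Set.mem_Ici.2 hg0x)).tendsto.comp ?_
        refine tendsto_nhdsWithin_of_tendsto_nhds_of_eventually_within _ hseq0' ?_
        exact Eventually.of_forall fun k => Set.mem_Ici.2 (le_max_right _ _)
      refine le_of_tendsto' hseq2 fun k => ?_
      have hminpos : 0 < min (g x) (1 / ((k:ℝ) + 1)) := lt_min h (by positivity)
      nlinarith [hx2 k, hminpos]
  have hfin : v x = F (g x) := le_antisymm hle hge
  rw [hfin, hx4]
end

section
/- Let (X, 𝒜, μ) be a finite measure space and γ > 1. Let (f_n) be measurable functions X → [0, ∞) with sup_n ∫_X f_n^γ dμ < ∞, and let f : X → [0, ∞) be integrable. Assume that ∫ f_n φ dμ → ∫ f φ dμ for every φ ∈ L^∞(μ) (weak convergence in L¹(μ)), and that ∫_X f_n ln f_n dμ → ∫_X f ln f dμ, where z ln z is extended by 0 at z = 0. Then f_n → f strongly in L¹(μ). -/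
set_option maxHeartbeats 1000000
open MeasureTheory Filter
open scoped ENNReal

lemma my_log_ge {u : ℝ} (hu : 0 < u) : 1 - 1/u ≤ Real.log u := by
  have h := Real.log_le_sub_one_of_pos (x := 1/u) (by positivity)
  rw [one_div, Real.log_inv] at h
  rw [one_div]
  linarith

/-- Bregman divergence of `z ln z` dominates `(√a - √b)²`. -/

lemma bregman_ge {a b : ℝ} (ha : 0 ≤ a) (hb : 0 < b) :
    (Real.sqrt a - Real.sqrt b)^2 ≤
      a * Real.log a - b * Real.log b - (Real.log b + 1) * (a - b) := by
  rcases eq_or_lt_of_le ha with h0 | ha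
  · rw [← h0]
    simp only [Real.log_zero, Real.sqrt_zero, mul_zero, zero_mul, zero_sub]
    rw [neg_sq, Real.sq_sqrt hb.le]
    nlinarith [Real.sq_sqrt hb.le]
  · have hsa : Real.sqrt a ^ 2 = a := Real.sq_sqrt ha.le
    have hsb : Real.sqrt b ^ 2 = b := Real.sq_sqrt hb.le
    set u : ℝ := Real.sqrt a / Real.sqrt b with hu
    have hsqa : 0 < Real.sqrt a := Real.sqrt_pos.2 ha
    have hsqb : 0 < Real.sqrt b := Real.sqrt_pos.2 hb
    have hupos : 0 < u := div_pos hsqa hsqb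
    have hlog : Real.log a - Real.log b = 2 * Real.log u := by
      rw [hu, Real.log_div hsqa.ne' hsqb.ne', Real.log_sqrt ha.le,
        Real.log_sqrt hb.le]
      ring
    have hkey : 1 - 1/u ≤ Real.log u := my_log_ge hupos
    have h1u : 1/u = Real.sqrt b / Real.sqrt a := by
      rw [hu, one_div, inv_div]
    -- expand
    have expand : a * Real.log a - b * Real.log b - (Real.log b + 1) * (a - b)
        - (Real.sqrt a - Real.sqrt b)^2
        = a * ((Real.log a - Real.log b) - 2 * (1 - Real.sqrt b / Real.sqrt a)) := by
      have : Real.sqrt a * Real.sqrt b = a * (Real.sqrt b / Real.sqrt a) := by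
        field_simp
        nlinarith [hsa]
      nlinarith [hsa, hsb, this]
    nlinarith [expand, hlog, hkey, h1u, mul_le_mul_of_nonneg_left hkey ha.le]

lemma sq_sqrt_sub_le {a b : ℝ} (ha : 0 ≤ a) (hb : 0 ≤ b) :
    (Real.sqrt a - Real.sqrt b)^2 ≤ |a - b| := by
  have h1 : (Real.sqrt a - Real.sqrt b) * (Real.sqrt a + Real.sqrt b) = a - b := by
    have := Real.sq_sqrt ha; have := Real.sq_sqrt hb; ring_nf; nlinarith
  have h2 : |Real.sqrt a - Real.sqrt b| ≤ Real.sqrt a + Real.sqrt b := by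
    rw [abs_sub_le_iff]
    constructor <;> nlinarith [Real.sqrt_nonneg a, Real.sqrt_nonneg b]
  calc (Real.sqrt a - Real.sqrt b)^2 = |Real.sqrt a - Real.sqrt b| * |Real.sqrt a - Real.sqrt b| := by
        rw [← abs_mul, ← sq, abs_of_nonneg (sq_nonneg _)]
    _ ≤ (Real.sqrt a + Real.sqrt b) * |Real.sqrt a - Real.sqrt b| :=
        mul_le_mul_of_nonneg_right h2 (abs_nonneg _)
    _ = |(Real.sqrt a - Real.sqrt b) * (Real.sqrt a + Real.sqrt b)| := by
        rw [abs_mul, abs_of_nonneg (by positivity : (0:ℝ) ≤ Real.sqrt a + Real.sqrt b)]; ring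
    _ = |a - b| := by rw [h1]

lemma phi_le_rpow {γ z : ℝ} (hγ : 1 < γ) (hz : 1 ≤ z) :
    z * Real.log z ≤ z ^ γ / (γ - 1) := by
  have hz0 : 0 < z := lt_of_lt_of_le one_pos hz
  have h1 : (γ - 1) * Real.log z ≤ z ^ (γ-1) - 1 := by
    have := Real.log_le_sub_one_of_pos (x := z ^ (γ-1)) (Real.rpow_pos_of_pos hz0 _)
    rwa [Real.log_rpow hz0] at this
  have h2 : z * (z ^ (γ - 1)) = z ^ γ := by
    nth_rewrite 1 [← Real.rpow_one z]
    rw [← Real.rpow_add hz0]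
    ring_nf
  rw [le_div_iff₀ (by linarith : (0:ℝ) < γ - 1)]
  nlinarith [mul_le_mul_of_nonneg_left h1 hz0.le, h2, hz0.le]

lemma abs_phi_le {γ z : ℝ} (hγ : 1 < γ) (hz : 0 ≤ z) :
    |z * Real.log z| ≤ z ^ γ / (γ - 1) + 1 := by
  have hpow : 0 ≤ z ^ γ / (γ - 1) := by
    apply div_nonneg (Real.rpow_nonneg hz _) (by linarith)
  rcases le_or_gt 1 z with h1 | h1
  · have hlog : 0 ≤ Real.log z := Real.log_nonneg h1
    rw [abs_of_nonneg (mul_nonneg (by linarith) hlog)]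
    have := phi_le_rpow hγ h1
    linarith
  · rcases eq_or_lt_of_le hz with h0 | h0
    · rw [← h0, Real.zero_rpow (ne_of_gt (by linarith))]; simp
    · have hlog : Real.log z ≤ 0 := Real.log_nonpos hz h1.le
      rw [abs_of_nonpos (mul_nonpos_of_nonneg_of_nonpos hz hlog)]
      have hinv := Real.log_le_sub_one_of_pos (x := 1/z) (by positivity)
      rw [one_div, Real.log_inv] at hinv
      have : -(z * Real.log z) ≤ 1 := by
        have := mul_le_mul_of_nonneg_left hinv hz
        rw [mul_sub, mul_inv_cancel₀ h0.ne'] at this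
        nlinarith
      linarith

/-- Bregman divergence from `a` to its clamp is small. -/

lemma bregman_clamp_le {γ a δ K : ℝ} (hγ : 1 < γ) (ha : 0 ≤ a) (hδ : 0 < δ)
    (hδ1 : δ ≤ 1) (hK : 1 ≤ K) :
    a * Real.log a - (max δ (min a K)) * Real.log (max δ (min a K))
      - (Real.log (max δ (min a K)) + 1) * (a - max δ (min a K))
      ≤ δ + (if K < a then (1/(γ-1) + 1) * a ^ γ else 0) := by
  have hδK : δ ≤ K := le_trans hδ1 hK
  rcases lt_or_ge K a with haK | haK
  · -- a > K : clamp = K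
    have hmin : min a K = K := min_eq_right haK.le
    have hmax : max δ (min a K) = K := by rw [hmin]; exact max_eq_right hδK
    rw [hmax, if_pos haK]
    have ha1 : 1 ≤ a := le_trans hK haK.le
    have hlogK : 0 ≤ Real.log K := Real.log_nonneg hK
    have hphi : a * Real.log a ≤ a ^ γ / (γ - 1) := phi_le_rpow hγ ha1
    have haγ : 0 ≤ a ^ γ := Real.rpow_nonneg ha _
    have hdiv : (1/(γ-1)) * a ^ γ = a ^ γ / (γ-1) := by ring
    nlinarith [mul_nonneg ha hlogK, hdiv]
  · rcases lt_or_ge a δ with haδ | haδ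
    · -- a < δ : clamp = δ
      have hmin : min a K = a := min_eq_left haK
      have hmax : max δ (min a K) = δ := by rw [hmin]; exact max_eq_left haδ.le
      rw [hmax, if_neg (not_lt.2 haK)]
      have hkey : a * Real.log a ≤ a * Real.log δ := by
        rcases eq_or_lt_of_le ha with h0 | h0
        · rw [← h0]; simp
        · exact mul_le_mul_of_nonneg_left (Real.log_le_log h0 haδ.le) ha
      nlinarith
    · -- δ ≤ a ≤ K : clamp = a
      have hmin : min a K = a := min_eq_left haK
      have hmax : max δ (min a K) = a := by rw [hmin]; exact max_eq_right haδ
      rw [hmax, if_neg (not_lt.2 haK)]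
      simp; linarith

/-- Distance to clamp is small. -/

lemma abs_clamp_sub_le {γ a δ K : ℝ} (hγ : 1 < γ) (ha : 0 ≤ a) (hδ : 0 < δ)
    (hδ1 : δ ≤ 1) (hK : 1 ≤ K) :
    |max δ (min a K) - a| ≤ δ + (if K < a then (1/(γ-1) + 1) * a ^ γ else 0) := by
  have hδK : δ ≤ K := le_trans hδ1 hK
  rcases lt_or_ge K a with haK | haK
  · have hmax : max δ (min a K) = K := by rw [min_eq_right haK.le]; exact max_eq_right hδK
    rw [hmax, if_pos haK]
    have ha1 : 1 ≤ a := le_trans hK haK.le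
    have haγ : a ≤ a ^ γ := by
      calc a = a ^ (1:ℝ) := (Real.rpow_one a).symm
      _ ≤ a ^ γ := Real.rpow_le_rpow_of_exponent_le ha1 hγ.le
    have h1γ : (1:ℝ) ≤ 1/(γ-1) + 1 := by
      have : 0 < 1/(γ-1) := div_pos one_pos (by linarith)
      linarith
    rw [abs_of_nonpos (by linarith)]
    nlinarith
  · rcases lt_or_ge a δ with haδ | haδ
    · have hmax : max δ (min a K) = δ := by rw [min_eq_left haK]; exact max_eq_left haδ.le
      rw [hmax, if_neg (not_lt.2 haK), abs_of_nonneg (by linarith)]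
      linarith
    · have hmax : max δ (min a K) = a := by rw [min_eq_left haK]; exact max_eq_right haδ
      rw [hmax, if_neg (not_lt.2 haK)]
      simp; linarith

lemma le_rpow_add_one {γ z : ℝ} (hγ : 1 < γ) (hz : 0 ≤ z) : z ≤ z ^ γ + 1 := by
  rcases le_or_gt z 1 with h1 | h1
  · have : 0 ≤ z ^ γ := Real.rpow_nonneg hz _
    linarith
  · have h2 : z ^ (1:ℝ) ≤ z ^ γ := Real.rpow_le_rpow_of_exponent_le h1.le hγ.le
    rw [Real.rpow_one] at h2
    linarith

lemma rpow_split {z γ : ℝ} (hz : 0 ≤ z) (hγ : 1 < γ) : z ^ γ = z * z ^ (γ - 1) := by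
  rcases eq_or_lt_of_le hz with h0 | h0
  · rw [← h0, Real.zero_rpow (by linarith : γ ≠ 0), zero_mul]
  · nth_rewrite 2 [← Real.rpow_one z]
    rw [← Real.rpow_add h0]
    ring_nf

lemma integrable_pack {X : Type*} [MeasurableSpace X] {μ : Measure X} [IsFiniteMeasure μ]
    {γ : ℝ} (hγ : 1 < γ) {u : X → ℝ} (hu : Measurable u) (hu0 : ∀ x, 0 ≤ u x)
    {M : ℝ} (hM : ∫⁻ x, ENNReal.ofReal (u x ^ γ) ∂μ ≤ ENNReal.ofReal M) :
    Integrable u μ ∧ Integrable (fun x => u x ^ γ) μ ∧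
      Integrable (fun x => u x * Real.log (u x)) μ ∧
      ∫⁻ x, ENNReal.ofReal (u x) ∂μ ≤ ENNReal.ofReal M + μ Set.univ := by
  have huγm : Measurable (fun x => u x ^ γ) :=
    (Real.continuous_rpow_const (by linarith : (0:ℝ) ≤ γ)).measurable.comp hu
  have hL1 : ∫⁻ x, ENNReal.ofReal (u x) ∂μ ≤ ENNReal.ofReal M + μ Set.univ := by
    calc ∫⁻ x, ENNReal.ofReal (u x) ∂μ
        ≤ ∫⁻ x, (ENNReal.ofReal (u x ^ γ) + 1) ∂μ := by
          apply lintegral_mono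
          intro x
          calc ENNReal.ofReal (u x) ≤ ENNReal.ofReal (u x ^ γ + 1) :=
                ENNReal.ofReal_le_ofReal (le_rpow_add_one hγ (hu0 x))
          _ ≤ ENNReal.ofReal (u x ^ γ) + ENNReal.ofReal 1 := ENNReal.ofReal_add_le
          _ = ENNReal.ofReal (u x ^ γ) + 1 := by rw [ENNReal.ofReal_one]
      _ = ∫⁻ x, ENNReal.ofReal (u x ^ γ) ∂μ + μ Set.univ := by
          rw [lintegral_add_right _ measurable_const, lintegral_const, one_mul]
      _ ≤ ENNReal.ofReal M + μ Set.univ := add_le_add hM le_rfl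
  have hint_uγ : Integrable (fun x => u x ^ γ) μ := by
    refine ⟨huγm.aestronglyMeasurable, ?_⟩
    rw [hasFiniteIntegral_iff_ofReal (ae_of_all _ (fun x => Real.rpow_nonneg (hu0 x) γ))]
    exact lt_of_le_of_lt hM ENNReal.ofReal_lt_top
  have hint_u : Integrable u μ := by
    refine ⟨hu.aestronglyMeasurable, ?_⟩
    rw [hasFiniteIntegral_iff_ofReal (ae_of_all _ hu0)]
    exact lt_of_le_of_lt hL1 (ENNReal.add_lt_top.2 ⟨ENNReal.ofReal_lt_top, measure_lt_top μ _⟩)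
  refine ⟨hint_u, hint_uγ, ?_, hL1⟩
  refine Integrable.mono' ((hint_uγ.div_const (γ - 1)).add (integrable_const 1))
    ((hu.mul (Real.measurable_log.comp hu)).aestronglyMeasurable) ?_
  exact ae_of_all _ (fun x => by
    rw [Real.norm_eq_abs]
    exact abs_phi_le hγ (hu0 x))

lemma weak_limit_rpow_bound {X : Type*} [MeasurableSpace X] {μ : Measure X} [IsFiniteMeasure μ]
    {γ : ℝ} (hγ : 1 < γ)
    {f : ℕ → X → ℝ} (hfm : ∀ n, Measurable (f n)) (hf0 : ∀ n x, 0 ≤ f n x)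
    {M : ℝ} (hM0 : 0 ≤ M)
    (hM : ∀ n, ∫⁻ x, ENNReal.ofReal (f n x ^ γ) ∂μ ≤ ENNReal.ofReal M)
    {g : X → ℝ} (hgm : Measurable g) (hg0 : ∀ x, 0 ≤ g x) (hgint : Integrable g μ)
    (hweak : ∀ φ : X → ℝ, MemLp φ ∞ μ →
      Tendsto (fun n => ∫ x, f n x * φ x ∂μ) atTop (nhds (∫ x, g x * φ x ∂μ))) :
    ∫⁻ x, ENNReal.ofReal (g x ^ γ) ∂μ ≤ ENNReal.ofReal M := by
  have hγ0 : (0:ℝ) < γ := by linarith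
  have hγ1 : (0:ℝ) ≤ γ - 1 := by linarith
  set γ' : ℝ := γ / (γ - 1) with hγ'def
  have hconj : γ.HolderConjugate γ' :=
    (Real.holderConjugate_iff_eq_conjExponent hγ).2 rfl
  have hne : γ - 1 ≠ 0 := by linarith
  have hmulγ : (γ - 1) * γ' = γ := by
    rw [hγ'def, mul_comm]; exact div_mul_cancel₀ γ hne
  -- truncations
  set gm : ℕ → X → ℝ := fun m x => min (g x) m with hgmdef
  have hgm_meas : ∀ m, Measurable (gm m) := fun m => hgm.min measurable_const
  have hgm0 : ∀ m x, 0 ≤ gm m x := fun m x => le_min (hg0 x) (Nat.cast_nonneg m)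
  have hgm_le : ∀ m x, gm m x ≤ g x := fun m x => min_le_left _ _
  have hgm_lem : ∀ m x, gm m x ≤ (m:ℝ) := fun m x => min_le_right _ _
  set φm : ℕ → X → ℝ := fun m x => gm m x ^ (γ - 1) with hφmdef
  have hφm_meas : ∀ m, Measurable (φm m) := fun m =>
    (Real.continuous_rpow_const hγ1).measurable.comp (hgm_meas m)
  have hφm0 : ∀ m x, 0 ≤ φm m x := fun m x => Real.rpow_nonneg (hgm0 m x) _
  have hφm_le : ∀ m x, φm m x ≤ (m:ℝ) ^ (γ - 1) := fun m x =>
    Real.rpow_le_rpow (hgm0 m x) (hgm_lem m x) hγ1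
  have hφmemℒp : ∀ m, MemLp (φm m) ∞ μ := fun m =>
    memLp_top_of_bound (hφm_meas m).aestronglyMeasurable ((m:ℝ) ^ (γ - 1))
      (ae_of_all _ (fun x => by
        rw [Real.norm_eq_abs, abs_of_nonneg (hφm0 m x)]; exact hφm_le m x))
  -- the truncated lintegrals
  set Im : ℕ → ℝ≥0∞ := fun m => ∫⁻ x, ENNReal.ofReal (gm m x ^ γ) ∂μ with hImdef
  have hIm_le : ∀ m, Im m ≤ ENNReal.ofReal ((m:ℝ) ^ γ) * μ Set.univ := by
    intro m
    rw [hImdef]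
    calc ∫⁻ x, ENNReal.ofReal (gm m x ^ γ) ∂μ
        ≤ ∫⁻ _, ENNReal.ofReal ((m:ℝ) ^ γ) ∂μ := lintegral_mono (fun x =>
          ENNReal.ofReal_le_ofReal (Real.rpow_le_rpow (hgm0 m x) (hgm_lem m x) hγ0.le))
      _ = ENNReal.ofReal ((m:ℝ) ^ γ) * μ Set.univ := by rw [lintegral_const]
  have hIm_ne_top : ∀ m, Im m ≠ ⊤ := fun m =>
    ((hIm_le m).trans_lt (ENNReal.mul_lt_top ENNReal.ofReal_lt_top (measure_lt_top μ _))).ne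
  -- integrability of products
  have hint_gmγ : ∀ m, Integrable (fun x => gm m x ^ γ) μ := by
    intro m
    refine Integrable.mono' (integrable_const ((m:ℝ) ^ γ))
      ((Real.continuous_rpow_const hγ0.le).measurable.comp (hgm_meas m)).aestronglyMeasurable
      (ae_of_all _ (fun x => ?_))
    rw [Real.norm_eq_abs, abs_of_nonneg (Real.rpow_nonneg (hgm0 m x) _)]
    exact Real.rpow_le_rpow (hgm0 m x) (hgm_lem m x) hγ0.le
  have hint_gφ : ∀ m, Integrable (fun x => g x * φm m x) μ := by
    intro m
    have : Integrable (fun x => φm m x * g x) μ :=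
      Integrable.bdd_mul hgint (hφm_meas m).aestronglyMeasurable
        (c := (m:ℝ) ^ (γ - 1)) (ae_of_all _ fun x => by
          rw [Real.norm_eq_abs, abs_of_nonneg (hφm0 m x)]; exact hφm_le m x)
    exact this.congr (ae_of_all _ (fun x => mul_comm _ _))
  -- Step 1: Hölder bound on ∫ f n * φm
  have step1 : ∀ m n, ∫ x, f n x * φm m x ∂μ ≤
      (ENNReal.ofReal M ^ (1/γ) * Im m ^ (1/γ')).toReal := by
    intro m n
    obtain ⟨hintf, -, -, -⟩ := integrable_pack hγ (hfm n) (hf0 n) (hM n)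
    have hintprod : Integrable (fun x => f n x * φm m x) μ := by
      have : Integrable (fun x => φm m x * f n x) μ :=
        Integrable.bdd_mul hintf (hφm_meas m).aestronglyMeasurable
          (c := (m:ℝ) ^ (γ - 1)) (ae_of_all _ fun x => by
            rw [Real.norm_eq_abs, abs_of_nonneg (hφm0 m x)]; exact hφm_le m x)
      exact this.congr (ae_of_all _ (fun x => mul_comm _ _))
    have hconv := ofReal_integral_eq_lintegral_ofReal hintprod
      (ae_of_all _ (fun x => mul_nonneg (hf0 n x) (hφm0 m x)))
    have hlint : ∫⁻ x, ENNReal.ofReal (f n x * φm m x) ∂μ ≤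
        ENNReal.ofReal M ^ (1/γ) * Im m ^ (1/γ') := by
      have heq : ∀ x, ENNReal.ofReal (f n x * φm m x) =
          (ENNReal.ofReal (f n x)) * (ENNReal.ofReal (φm m x)) := fun x =>
        ENNReal.ofReal_mul (hf0 n x)
      calc ∫⁻ x, ENNReal.ofReal (f n x * φm m x) ∂μ
          = ∫⁻ x, ((fun y => ENNReal.ofReal (f n y)) * (fun y => ENNReal.ofReal (φm m y))) x ∂μ := by
            apply lintegral_congr; intro x; exact heq x
        _ ≤ (∫⁻ x, ENNReal.ofReal (f n x) ^ γ ∂μ) ^ (1/γ) *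
            (∫⁻ x, ENNReal.ofReal (φm m x) ^ γ' ∂μ) ^ (1/γ') :=
            ENNReal.lintegral_mul_le_Lp_mul_Lq μ hconj
              ((ENNReal.measurable_ofReal.comp (hfm n)).aemeasurable)
              ((ENNReal.measurable_ofReal.comp (hφm_meas m)).aemeasurable)
        _ = (∫⁻ x, ENNReal.ofReal (f n x ^ γ) ∂μ) ^ (1/γ) *
            (∫⁻ x, ENNReal.ofReal (gm m x ^ γ) ∂μ) ^ (1/γ') := by
            congr 1
            · congr 1
              apply lintegral_congr; intro x
              rw [ENNReal.ofReal_rpow_of_nonneg (hf0 n x) hγ0.le]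
            · congr 1
              apply lintegral_congr; intro x
              rw [ENNReal.ofReal_rpow_of_nonneg (hφm0 m x) hconj.symm.nonneg]
              congr 1
              rw [hφmdef]
              rw [← Real.rpow_mul (hgm0 m x), hmulγ]
        _ ≤ ENNReal.ofReal M ^ (1/γ) * Im m ^ (1/γ') := by
            apply mul_le_mul'
            · exact ENNReal.rpow_le_rpow (hM n) (by positivity)
            · exact le_refl _
    calc ∫ x, f n x * φm m x ∂μ
        = (∫⁻ x, ENNReal.ofReal (f n x * φm m x) ∂μ).toReal := by
          rw [← hconv, ENNReal.toReal_ofReal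
            (integral_nonneg (fun x => mul_nonneg (hf0 n x) (hφm0 m x)))]
      _ ≤ (ENNReal.ofReal M ^ (1/γ) * Im m ^ (1/γ')).toReal := by
          apply ENNReal.toReal_mono _ hlint
          exact ENNReal.mul_ne_top
            (ENNReal.rpow_ne_top_of_nonneg (by positivity) ENNReal.ofReal_ne_top)
            (ENNReal.rpow_ne_top_of_nonneg (by positivity) (hIm_ne_top m))
    -- end step1
  -- Step 2: limit bound
  have step2 : ∀ m, ∫ x, g x * φm m x ∂μ ≤
      (ENNReal.ofReal M ^ (1/γ) * Im m ^ (1/γ')).toReal := fun m =>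
    le_of_tendsto (hweak (φm m) (hφmemℒp m)) (Eventually.of_forall (step1 m))
  -- Step 3: Im.toReal bounded below
  have step3 : ∀ m, (Im m).toReal ≤ ∫ x, g x * φm m x ∂μ := by
    intro m
    have h1 : (Im m).toReal = ∫ x, gm m x ^ γ ∂μ := by
      simp only [hImdef]
      rw [← ofReal_integral_eq_lintegral_ofReal (hint_gmγ m)
        (ae_of_all _ (fun x => Real.rpow_nonneg (hgm0 m x) _))]
      rw [ENNReal.toReal_ofReal (integral_nonneg (fun x => Real.rpow_nonneg (hgm0 m x) _))]
    rw [h1]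
    apply integral_mono (hint_gmγ m) (hint_gφ m)
    intro x
    calc gm m x ^ γ = gm m x * φm m x := rpow_split (hgm0 m x) hγ
      _ ≤ g x * φm m x := mul_le_mul_of_nonneg_right (hgm_le m x) (hφm0 m x)
  -- Step 4: Im ≤ ofReal M
  have step4 : ∀ m, Im m ≤ ENNReal.ofReal M := by
    intro m
    rw [ENNReal.le_ofReal_iff_toReal_le (hIm_ne_top m) hM0]
    set t : ℝ := (Im m).toReal with htdef
    have ht0 : 0 ≤ t := ENNReal.toReal_nonneg
    have hkey : t ≤ M ^ (1/γ) * t ^ (1/γ') := by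
      have := (step3 m).trans (step2 m)
      rwa [ENNReal.toReal_mul, ← ENNReal.toReal_rpow, ← ENNReal.toReal_rpow,
        ENNReal.toReal_ofReal hM0] at this
    rcases eq_or_lt_of_le ht0 with h0 | h0
    · rw [← h0]; exact hM0
    · have hsplit : t = t ^ (1/γ) * t ^ (1/γ') := by
        rw [← Real.rpow_add h0]
        rw [show 1/γ + 1/γ' = 1 by
          rw [one_div, one_div]; exact hconj.inv_add_inv_eq_one]
        rw [Real.rpow_one]
      have h2 : t ^ (1/γ) ≤ M ^ (1/γ) := by
        have hpos : 0 < t ^ (1/γ') := Real.rpow_pos_of_pos h0 _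
        have := hkey
        rw [hsplit] at this
        exact le_of_mul_le_mul_right (by linarith [this]) hpos
      calc t = (t ^ (1/γ)) ^ γ := by
            rw [← Real.rpow_mul ht0, one_div, inv_mul_cancel₀ hγ0.ne', Real.rpow_one]
        _ ≤ (M ^ (1/γ)) ^ γ := Real.rpow_le_rpow (Real.rpow_nonneg ht0 _) h2 hγ0.le
        _ = M := by rw [← Real.rpow_mul hM0, one_div, inv_mul_cancel₀ hγ0.ne', Real.rpow_one]
  -- Step 5: monotone convergence
  have hpt : ∀ x, (⨆ m, ENNReal.ofReal (gm m x ^ γ)) = ENNReal.ofReal (g x ^ γ) := by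
    intro x
    apply le_antisymm
    · exact iSup_le (fun m => ENNReal.ofReal_le_ofReal
        (Real.rpow_le_rpow (hgm0 m x) (hgm_le m x) hγ0.le))
    · refine le_iSup_of_le ⌈g x⌉₊ (le_of_eq ?_)
      congr 2
      rw [hgmdef]
      exact (min_eq_left (Nat.le_ceil (g x))).symm
  have hmono : ∀ᵐ x ∂μ, Monotone fun m => ENNReal.ofReal (gm m x ^ γ) := by
    refine ae_of_all _ (fun x m m' hmm' => ?_)
    apply ENNReal.ofReal_le_ofReal
    apply Real.rpow_le_rpow (hgm0 m x) _ hγ0.le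
    exact min_le_min (le_refl _) (Nat.cast_le.2 hmm')
  calc ∫⁻ x, ENNReal.ofReal (g x ^ γ) ∂μ
      = ∫⁻ x, ⨆ m, ENNReal.ofReal (gm m x ^ γ) ∂μ := by
        apply lintegral_congr; intro x; rw [hpt x]
    _ = ⨆ m, Im m := lintegral_iSup'
        (fun m => (ENNReal.measurable_ofReal.comp
          ((Real.continuous_rpow_const hγ0.le).measurable.comp (hgm_meas m))).aemeasurable)
        hmono
    _ ≤ ENNReal.ofReal M := iSup_le step4



/-- Let `(X, 𝒜, μ)` be a finite measure space and `γ > 1`.  Let `(f_n)`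
be measurable functions `X → [0,∞)` with `sup_n ∫ f_n^γ dμ < ∞` and let `f : X → [0,∞)` be
integrable.  If `∫ f_n φ dμ → ∫ f φ dμ` for every `φ ∈ L^∞(μ)` (weak convergence in `L¹`)
and `∫ f_n ln f_n dμ → ∫ f ln f dμ` (where `z ln z` is extended by `0` at `z = 0`; note
`Real.log 0 = 0` in Mathlib), then `f_n → f` strongly in `L¹(μ)`. -/
theorem stmt_14 {X : Type*} [MeasurableSpace X] (μ : Measure X) [IsFiniteMeasure μ]
    (γ : ℝ) (hγ : 1 < γ)
    (f : ℕ → X → ℝ) (hfm : ∀ n, Measurable (f n)) (hf0 : ∀ n x, 0 ≤ f n x)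
    (hbd : ∃ M : ℝ, ∀ n, ∫⁻ x, ENNReal.ofReal (f n x ^ γ) ∂μ ≤ ENNReal.ofReal M)
    (flim : X → ℝ) (hflim0 : ∀ x, 0 ≤ flim x) (hflimint : Integrable flim μ)
    (hweak : ∀ φ : X → ℝ, MemLp φ ∞ μ →
      Tendsto (fun n => ∫ x, f n x * φ x ∂μ) atTop (nhds (∫ x, flim x * φ x ∂μ)))
    (hent : Tendsto (fun n => ∫ x, f n x * Real.log (f n x) ∂μ) atTop
      (nhds (∫ x, flim x * Real.log (flim x) ∂μ))) :
    Tendsto (fun n => ∫ x, |f n x - flim x| ∂μ) atTop (nhds 0) := by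
  classical
  obtain ⟨M₀, hM₀⟩ := hbd
  set M : ℝ := max M₀ 0 with hMdef
  have hM : ∀ n, ∫⁻ x, ENNReal.ofReal (f n x ^ γ) ∂μ ≤ ENNReal.ofReal M :=
    fun n => (hM₀ n).trans (ENNReal.ofReal_le_ofReal (le_max_left _ _))
  have hM0 : (0:ℝ) ≤ M := le_max_right _ _
  have hγ1 : (0:ℝ) < γ - 1 := by linarith
  -- measurable nonneg representative g of flim
  obtain ⟨g, hgm, hg0, hge⟩ : ∃ g : X → ℝ, Measurable g ∧ (∀ x, 0 ≤ g x) ∧ flim =ᵐ[μ] g := by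
    refine ⟨fun x => max (hflimint.1.mk flim x) 0,
      hflimint.1.stronglyMeasurable_mk.measurable.max measurable_const,
      fun x => le_max_right _ _, ?_⟩
    filter_upwards [hflimint.1.ae_eq_mk] with x hx
    rw [← hx, max_eq_left (hflim0 x)]
  have hgint : Integrable g μ := hflimint.congr hge
  have hweakg : ∀ φ : X → ℝ, MemLp φ ∞ μ →
      Tendsto (fun n => ∫ x, f n x * φ x ∂μ) atTop (nhds (∫ x, g x * φ x ∂μ)) := by
    intro φ hφ
    have : ∫ x, flim x * φ x ∂μ = ∫ x, g x * φ x ∂μ :=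
      integral_congr_ae (by filter_upwards [hge] with x hx; rw [hx])
    exact this ▸ hweak φ hφ
  have hentg : Tendsto (fun n => ∫ x, f n x * Real.log (f n x) ∂μ) atTop
      (nhds (∫ x, g x * Real.log (g x) ∂μ)) := by
    have : ∫ x, flim x * Real.log (flim x) ∂μ = ∫ x, g x * Real.log (g x) ∂μ :=
      integral_congr_ae (by filter_upwards [hge] with x hx; rw [hx])
    exact this ▸ hent
  -- reduce to g
  suffices H : Tendsto (fun n => ∫ x, |f n x - g x| ∂μ) atTop (nhds 0) by
    refine H.congr (fun n => ?_)
    exact integral_congr_ae (by filter_upwards [hge] with x hx; rw [hx])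
  clear hweak hent hge hflimint hflim0
  -- integrability package
  have packf := fun n => integrable_pack hγ (hfm n) (hf0 n) (hM n)
  have hMg : ∫⁻ x, ENNReal.ofReal (g x ^ γ) ∂μ ≤ ENNReal.ofReal M :=
    weak_limit_rpow_bound hγ hfm hf0 hM0 hM hgm hg0 hgint hweakg
  have packg := integrable_pack hγ hgm hg0 hMg
  -- bound on ∫ f n
  have hfL1 : ∀ n, ∫ x, f n x ∂μ ≤ (ENNReal.ofReal M + μ Set.univ).toReal := by
    intro n
    have h1 := ofReal_integral_eq_lintegral_ofReal (packf n).1 (ae_of_all _ (hf0 n))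
    have h2 : ∫ x, f n x ∂μ = (∫⁻ x, ENNReal.ofReal (f n x) ∂μ).toReal := by
      rw [← h1, ENNReal.toReal_ofReal (integral_nonneg (hf0 n))]
    rw [h2]
    exact ENNReal.toReal_mono
      (ENNReal.add_ne_top.2 ⟨ENNReal.ofReal_ne_top, (measure_lt_top μ _).ne⟩)
      (packf n).2.2.2
  -- uniform bound for ∫ (√fn + √g)²
  set T : ℝ := 2 * (ENNReal.ofReal M + μ Set.univ).toReal + 2 * ∫ x, g x ∂μ + 1 with hTdef
  have hT1 : (1:ℝ) ≤ T := by
    have h1 : (0:ℝ) ≤ (ENNReal.ofReal M + μ Set.univ).toReal := ENNReal.toReal_nonneg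
    have h2 : (0:ℝ) ≤ ∫ x, g x ∂μ := integral_nonneg hg0
    rw [hTdef]; linarith
  have hint_sqsum : ∀ n, Integrable (fun x => (Real.sqrt (f n x) + Real.sqrt (g x))^2) μ := by
    intro n
    refine Integrable.mono' (((packf n).1.const_mul 2).add (hgint.const_mul 2))
      ((((Real.continuous_sqrt.measurable.comp (hfm n)).add
        (Real.continuous_sqrt.measurable.comp hgm)).pow_const 2).aestronglyMeasurable)
      (ae_of_all _ (fun x => ?_))
    simp only [Pi.add_apply]
    rw [Real.norm_eq_abs, abs_of_nonneg (sq_nonneg _)]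
    nlinarith [Real.sq_sqrt (hf0 n x), Real.sq_sqrt (hg0 x),
      Real.sqrt_nonneg (f n x), Real.sqrt_nonneg (g x),
      sq_nonneg (Real.sqrt (f n x) - Real.sqrt (g x)),
      sq_nonneg (Real.sqrt (f n x) + Real.sqrt (g x))]
  have hint_sqdiff : ∀ n, Integrable (fun x => (Real.sqrt (f n x) - Real.sqrt (g x))^2) μ := by
    intro n
    refine Integrable.mono' (((packf n).1.const_mul 2).add (hgint.const_mul 2))
      ((((Real.continuous_sqrt.measurable.comp (hfm n)).sub
        (Real.continuous_sqrt.measurable.comp hgm)).pow_const 2).aestronglyMeasurable)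
      (ae_of_all _ (fun x => ?_))
    simp only [Pi.add_apply]
    rw [Real.norm_eq_abs, abs_of_nonneg (sq_nonneg _)]
    nlinarith [Real.sq_sqrt (hf0 n x), Real.sq_sqrt (hg0 x),
      Real.sqrt_nonneg (f n x), Real.sqrt_nonneg (g x),
      sq_nonneg (Real.sqrt (f n x) - Real.sqrt (g x)),
      sq_nonneg (Real.sqrt (f n x) + Real.sqrt (g x))]
  have hTn : ∀ n, ∫ x, (Real.sqrt (f n x) + Real.sqrt (g x))^2 ∂μ ≤ T := by
    intro n
    calc ∫ x, (Real.sqrt (f n x) + Real.sqrt (g x))^2 ∂μ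
        ≤ ∫ x, (2 * f n x + 2 * g x) ∂μ := by
          apply integral_mono (hint_sqsum n) (((packf n).1.const_mul 2).add (hgint.const_mul 2))
          intro x
          simp only [Pi.add_apply]
          nlinarith [Real.sq_sqrt (hf0 n x), Real.sq_sqrt (hg0 x),
            Real.sqrt_nonneg (f n x), Real.sqrt_nonneg (g x),
            sq_nonneg (Real.sqrt (f n x) - Real.sqrt (g x)),
            sq_nonneg (Real.sqrt (f n x) + Real.sqrt (g x))]
      _ = 2 * ∫ x, f n x ∂μ + 2 * ∫ x, g x ∂μ := by
          rw [integral_add ((packf n).1.const_mul 2) (hgint.const_mul 2),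
            integral_const_mul, integral_const_mul]
      _ ≤ T := by
          have := hfL1 n
          rw [hTdef]; linarith
  -- THE CORE CLAIM
  have core : ∀ η : ℝ, 0 < η → ∀ᶠ n in atTop,
      ∫ x, (Real.sqrt (f n x) - Real.sqrt (g x))^2 ∂μ ≤ η := by
    intro η hη
    set A : ℝ := (μ Set.univ).toReal with hAdef
    have hA0 : 0 ≤ A := ENNReal.toReal_nonneg
    set cγ : ℝ := 1/(γ-1) + 1 with hcγdef
    have hcγ0 : 0 < cγ := by
      have : 0 < 1/(γ-1) := div_pos one_pos hγ1
      rw [hcγdef]; linarith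
    set c1 : ℝ := 4 * A + 2 with hc1def
    have hc1 : 0 < c1 := by rw [hc1def]; linarith
    set δ : ℝ := min 1 (η / (2 * c1)) with hδdef
    have hδ0 : 0 < δ := lt_min one_pos (by positivity)
    have hδ1 : δ ≤ 1 := min_le_left _ _
    have hδc1 : c1 * δ ≤ η/2 := by
      have h1 : δ ≤ η / (2 * c1) := min_le_right _ _
      have := mul_le_mul_of_nonneg_left h1 hc1.le
      calc c1 * δ ≤ c1 * (η / (2 * c1)) := this
        _ = η / 2 := by field_simp
    -- the tail error term
    set E : ℕ → ℝ := fun K => ∫ x, (if (K:ℝ) < g x then cγ * g x ^ γ else 0) ∂μ with hEdef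
    have hgγm : Measurable (fun x => g x ^ γ) :=
      (Real.continuous_rpow_const (by linarith : (0:ℝ) ≤ γ)).measurable.comp hgm
    have hEmeas : ∀ K : ℕ, Measurable (fun x => if (K:ℝ) < g x then cγ * g x ^ γ else 0) :=
      fun K => Measurable.ite (measurableSet_lt measurable_const hgm)
        (hgγm.const_mul cγ) measurable_const
    have hEptle : ∀ (K : ℕ) x, (if (K:ℝ) < g x then cγ * g x ^ γ else 0) ≤ cγ * g x ^ γ := by
      intro K x
      split
      · exact le_refl _
      · exact mul_nonneg hcγ0.le (Real.rpow_nonneg (hg0 x) _)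
    have hEpt0 : ∀ (K : ℕ) x, 0 ≤ (if (K:ℝ) < g x then cγ * g x ^ γ else 0) := by
      intro K x
      split
      · exact mul_nonneg hcγ0.le (Real.rpow_nonneg (hg0 x) _)
      · exact le_refl _
    have hEint : ∀ K : ℕ, Integrable (fun x => if (K:ℝ) < g x then cγ * g x ^ γ else 0) μ := by
      intro K
      refine Integrable.mono' (packg.2.1.const_mul cγ) (hEmeas K).aestronglyMeasurable
        (ae_of_all _ (fun x => ?_))
      rw [Real.norm_eq_abs, abs_of_nonneg (hEpt0 K x)]
      exact hEptle K x
    have hEtend : Tendsto E atTop (nhds 0) := by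
      have hptlim : ∀ x, Tendsto (fun K : ℕ => if (K:ℝ) < g x then cγ * g x ^ γ else 0)
          atTop (nhds 0) := by
        intro x
        apply Tendsto.congr' _ (tendsto_const_nhds (x := (0:ℝ)))
        rw [Filter.EventuallyEq, eventually_atTop]
        refine ⟨⌈g x⌉₊, fun K hK => ?_⟩
        rw [if_neg (not_lt.2 ((Nat.le_ceil (g x)).trans (Nat.cast_le.2 hK)))]
      have hdc := tendsto_integral_of_dominated_convergence (μ := μ)
        (F := fun (K:ℕ) x => if (K:ℝ) < g x then cγ * g x ^ γ else 0)
        (f := fun _ => (0:ℝ)) (bound := fun x => cγ * g x ^ γ)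
        (fun K => (hEmeas K).aestronglyMeasurable) (packg.2.1.const_mul cγ)
        (fun K => ae_of_all _ (fun x => by
          rw [Real.norm_eq_abs, abs_of_nonneg (hEpt0 K x)]; exact hEptle K x))
        (ae_of_all _ hptlim)
      rw [integral_zero] at hdc
      exact hdc
    obtain ⟨K, hK1, hKE⟩ : ∃ K : ℕ, 1 ≤ (K:ℝ) ∧ E K ≤ η/8 := by
      have h1 : ∀ᶠ K : ℕ in atTop, 1 ≤ (K:ℝ) := by
        rw [eventually_atTop]
        exact ⟨1, fun K hK => by exact_mod_cast Nat.one_le_cast.2 hK⟩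
      have h2 : ∀ᶠ K : ℕ in atTop, E K ≤ η/8 :=
        hEtend.eventually (eventually_le_nhds (by linarith))
      exact (h1.and h2).exists
    have hδK : δ ≤ (K:ℝ) := hδ1.trans hK1
    -- the clamp and the bounded weight
    set h : X → ℝ := fun x => max δ (min (g x) K) with hhdef
    have hhm : Measurable h := measurable_const.max (hgm.min measurable_const)
    have hhδ : ∀ x, δ ≤ h x := fun x => le_max_left _ _
    have hh0 : ∀ x, 0 < h x := fun x => lt_of_lt_of_le hδ0 (hhδ x)
    have hhK : ∀ x, h x ≤ (K:ℝ) := fun x => max_le hδK (min_le_right _ _)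
    set ψ : X → ℝ := fun x => Real.log (h x) + 1 with hψdef
    have hψm : Measurable ψ := (Real.measurable_log.comp hhm).add measurable_const
    set Cψ : ℝ := |Real.log δ| + Real.log K + 1 with hCψdef
    have hlogK0 : 0 ≤ Real.log K := Real.log_nonneg hK1
    have hψb : ∀ x, |ψ x| ≤ Cψ := by
      intro x
      have hl1 : Real.log δ ≤ Real.log (h x) := Real.log_le_log hδ0 (hhδ x)
      have hl2 : Real.log (h x) ≤ Real.log K := Real.log_le_log (hh0 x) (hhK x)
      rw [hψdef, hCψdef, abs_le]
      constructor
      · have := neg_abs_le (Real.log δ)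
        simp only
        linarith
      · have := le_abs_self (Real.log δ)
        have h0 : (0:ℝ) ≤ |Real.log δ| := abs_nonneg _
        simp only
        linarith
    have hψmem : MemLp ψ ∞ μ := memLp_top_of_bound hψm.aestronglyMeasurable Cψ
      (ae_of_all _ (fun x => by rw [Real.norm_eq_abs]; exact hψb x))
    -- integrability of all pieces
    have hinth : Integrable h μ := by
      refine Integrable.mono' (integrable_const (K:ℝ)) hhm.aestronglyMeasurable
        (ae_of_all _ (fun x => ?_))
      rw [Real.norm_eq_abs, abs_of_nonneg (hh0 x).le]
      exact hhK x
    have hint_Φh : Integrable (fun x => h x * Real.log (h x)) μ := by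
      refine Integrable.mono' (integrable_const ((K:ℝ) ^ γ / (γ-1) + 1))
        ((hhm.mul (Real.measurable_log.comp hhm)).aestronglyMeasurable)
        (ae_of_all _ (fun x => ?_))
      rw [Real.norm_eq_abs]
      refine (abs_phi_le hγ (hh0 x).le).trans ?_
      have h1 : h x ^ γ ≤ (K:ℝ) ^ γ := Real.rpow_le_rpow (hh0 x).le (hhK x) (by linarith)
      have hd := mul_le_mul_of_nonneg_right h1 (inv_nonneg.2 hγ1.le)
      rw [← div_eq_mul_inv, ← div_eq_mul_inv] at hd
      linarith
    have hint_ψf : ∀ n, Integrable (fun x => f n x * ψ x) μ := by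
      intro n
      have : Integrable (fun x => ψ x * f n x) μ :=
        Integrable.bdd_mul (packf n).1 hψm.aestronglyMeasurable
          (c := Cψ) (ae_of_all _ fun x => by rw [Real.norm_eq_abs]; exact hψb x)
      exact this.congr (ae_of_all _ (fun x => mul_comm _ _))
    have hint_ψg : Integrable (fun x => g x * ψ x) μ := by
      have : Integrable (fun x => ψ x * g x) μ :=
        Integrable.bdd_mul hgint hψm.aestronglyMeasurable
          (c := Cψ) (ae_of_all _ fun x => by rw [Real.norm_eq_abs]; exact hψb x)
      exact this.congr (ae_of_all _ (fun x => mul_comm _ _))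
    have hint_ψh : Integrable (fun x => h x * ψ x) μ := by
      have : Integrable (fun x => ψ x * h x) μ :=
        Integrable.bdd_mul hinth hψm.aestronglyMeasurable
          (c := Cψ) (ae_of_all _ fun x => by rw [Real.norm_eq_abs]; exact hψb x)
      exact this.congr (ae_of_all _ (fun x => mul_comm _ _))
    -- Bregman divergences
    set D : ℕ → X → ℝ := fun n x => f n x * Real.log (f n x) - h x * Real.log (h x)
      - (Real.log (h x) + 1) * (f n x - h x) with hDdef
    set Dg : X → ℝ := fun x => g x * Real.log (g x) - h x * Real.log (h x)
      - (Real.log (h x) + 1) * (g x - h x) with hDgdef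
    have i1 : ∀ n, Integrable (fun x => f n x * Real.log (f n x) - h x * Real.log (h x)) μ :=
      fun n => (packf n).2.2.1.sub hint_Φh
    have i2 : ∀ n, Integrable (fun x => f n x * ψ x - h x * ψ x) μ :=
      fun n => (hint_ψf n).sub hint_ψh
    have j1 : Integrable (fun x => g x * Real.log (g x) - h x * Real.log (h x)) μ :=
      packg.2.2.1.sub hint_Φh
    have j2 : Integrable (fun x => g x * ψ x - h x * ψ x) μ := hint_ψg.sub hint_ψh
    have hDeq : ∀ n, D n = fun x => (f n x * Real.log (f n x) - h x * Real.log (h x))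
        - (f n x * ψ x - h x * ψ x) := by
      intro n; funext x; rw [hDdef, hψdef]; ring
    have hDgeq : Dg = fun x => (g x * Real.log (g x) - h x * Real.log (h x))
        - (g x * ψ x - h x * ψ x) := by
      funext x; rw [hDgdef, hψdef]; ring
    have hint_D : ∀ n, Integrable (D n) μ := by
      intro n
      rw [hDeq n]
      exact (i1 n).sub (i2 n)
    have hint_Dg : Integrable Dg μ := by
      rw [hDgeq]
      exact j1.sub j2
    have hInt_eq : ∀ n, ∫ x, D n x ∂μ =
        (∫ x, f n x * Real.log (f n x) ∂μ - ∫ x, h x * Real.log (h x) ∂μ)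
        - (∫ x, f n x * ψ x ∂μ - ∫ x, h x * ψ x ∂μ) := by
      intro n
      rw [hDeq n, integral_sub (i1 n) (i2 n),
        integral_sub (packf n).2.2.1 hint_Φh, integral_sub (hint_ψf n) hint_ψh]
    set L : ℝ := (∫ x, g x * Real.log (g x) ∂μ - ∫ x, h x * Real.log (h x) ∂μ)
        - (∫ x, g x * ψ x ∂μ - ∫ x, h x * ψ x ∂μ) with hLdef
    have hlimD : Tendsto (fun n => ∫ x, D n x ∂μ) atTop (nhds L) := by
      have t1 : Tendsto (fun n : ℕ => ∫ x, f n x * Real.log (f n x) ∂μ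
            - ∫ x, h x * Real.log (h x) ∂μ) atTop
          (nhds (∫ x, g x * Real.log (g x) ∂μ - ∫ x, h x * Real.log (h x) ∂μ)) :=
        hentg.sub tendsto_const_nhds
      have t2 : Tendsto (fun n : ℕ => ∫ x, f n x * ψ x ∂μ - ∫ x, h x * ψ x ∂μ) atTop
          (nhds (∫ x, g x * ψ x ∂μ - ∫ x, h x * ψ x ∂μ)) :=
        (hweakg ψ hψmem).sub tendsto_const_nhds
      have t3 := t1.sub t2
      rw [hLdef]
      exact Tendsto.congr (fun n => (hInt_eq n).symm) t3
    have hL_eq : L = ∫ x, Dg x ∂μ := by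
      rw [hLdef, hDgeq, integral_sub j1 j2,
        integral_sub packg.2.2.1 hint_Φh, integral_sub hint_ψg hint_ψh]
    have hbound_int : Integrable (fun x => δ + (if (K:ℝ) < g x then cγ * g x ^ γ else 0)) μ :=
      (integrable_const δ).add (hEint K)
    have hbound_val : ∫ x, (δ + (if (K:ℝ) < g x then cγ * g x ^ γ else 0)) ∂μ
        = A * δ + E K := by
      rw [integral_add (integrable_const δ) (hEint K), integral_const, smul_eq_mul]
      rfl
    have hL_le : L ≤ A * δ + E K := by
      rw [hL_eq, ← hbound_val]
      apply integral_mono hint_Dg hbound_int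
      intro x
      rw [hDgdef]
      exact bregman_clamp_le hγ (hg0 x) hδ0 hδ1 hK1
    -- integrability of square differences to h
    have hsqm : Measurable (fun x => (Real.sqrt (g x) - Real.sqrt (h x))^2) :=
      ((Real.continuous_sqrt.measurable.comp hgm).sub
        (Real.continuous_sqrt.measurable.comp hhm)).pow_const 2
    have hint_sqgh : Integrable (fun x => (Real.sqrt (g x) - Real.sqrt (h x))^2) μ := by
      refine Integrable.mono' ((hgint.const_mul 2).add (hinth.const_mul 2))
        hsqm.aestronglyMeasurable (ae_of_all _ (fun x => ?_))
      simp only [Pi.add_apply]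
      rw [Real.norm_eq_abs, abs_of_nonneg (sq_nonneg _)]
      nlinarith [Real.sq_sqrt (hg0 x), Real.sq_sqrt (hh0 x).le,
        Real.sqrt_nonneg (g x), Real.sqrt_nonneg (h x),
        sq_nonneg (Real.sqrt (g x) + Real.sqrt (h x))]
    have hint_sqfh : ∀ n, Integrable (fun x => (Real.sqrt (f n x) - Real.sqrt (h x))^2) μ := by
      intro n
      refine Integrable.mono' (((packf n).1.const_mul 2).add (hinth.const_mul 2))
        (((Real.continuous_sqrt.measurable.comp (hfm n)).sub
          (Real.continuous_sqrt.measurable.comp hhm)).pow_const 2).aestronglyMeasurable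
        (ae_of_all _ (fun x => ?_))
      simp only [Pi.add_apply]
      rw [Real.norm_eq_abs, abs_of_nonneg (sq_nonneg _)]
      nlinarith [Real.sq_sqrt (hf0 n x), Real.sq_sqrt (hh0 x).le,
        Real.sqrt_nonneg (f n x), Real.sqrt_nonneg (h x),
        sq_nonneg (Real.sqrt (f n x) + Real.sqrt (h x))]
    -- bound ∫ (√h - √g)²
    have hth : ∫ x, (Real.sqrt (g x) - Real.sqrt (h x))^2 ∂μ ≤ A * δ + E K := by
      rw [← hbound_val]
      apply integral_mono hint_sqgh hbound_int
      intro x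
      calc (Real.sqrt (g x) - Real.sqrt (h x))^2 ≤ |g x - h x| :=
            sq_sqrt_sub_le (hg0 x) (hh0 x).le
        _ = |h x - g x| := abs_sub_comm _ _
        _ ≤ δ + (if (K:ℝ) < g x then cγ * g x ^ γ else 0) := by
            rw [hhdef]
            exact abs_clamp_sub_le hγ (hg0 x) hδ0 hδ1 hK1
    -- bound ∫ (√fn - √h)² by ∫ D n
    have hsfh_le : ∀ n, ∫ x, (Real.sqrt (f n x) - Real.sqrt (h x))^2 ∂μ ≤ ∫ x, D n x ∂μ := by
      intro n
      apply integral_mono (hint_sqfh n) (hint_D n)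
      intro x
      rw [hDdef]
      exact bregman_ge (hf0 n x) (hh0 x)
    -- eventually bound on ∫ D n
    have heven : ∀ᶠ n in atTop, ∫ x, D n x ∂μ ≤ L + δ :=
      hlimD.eventually (eventually_le_nhds (by linarith))
    -- combine
    filter_upwards [heven] with n hn
    have hsplit : ∫ x, (Real.sqrt (f n x) - Real.sqrt (g x))^2 ∂μ ≤
        2 * ∫ x, (Real.sqrt (f n x) - Real.sqrt (h x))^2 ∂μ +
        2 * ∫ x, (Real.sqrt (g x) - Real.sqrt (h x))^2 ∂μ := by
      rw [← integral_const_mul, ← integral_const_mul,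
        ← integral_add ((hint_sqfh n).const_mul 2) (hint_sqgh.const_mul 2)]
      apply integral_mono (hint_sqdiff n)
        (((hint_sqfh n).const_mul 2).add (hint_sqgh.const_mul 2))
      intro x
      simp only [Pi.add_apply]
      nlinarith [sq_nonneg (Real.sqrt (f n x) + Real.sqrt (g x) - 2 * Real.sqrt (h x))]
    have h1 : ∫ x, D n x ∂μ ≤ A * δ + E K + δ := by linarith
    have h2 : ∫ x, (Real.sqrt (f n x) - Real.sqrt (h x))^2 ∂μ ≤ A * δ + E K + δ :=
      (hsfh_le n).trans h1
    calc ∫ x, (Real.sqrt (f n x) - Real.sqrt (g x))^2 ∂μ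
        ≤ 2 * (A * δ + E K + δ) + 2 * (A * δ + E K) := by linarith [hsplit, hth, h2]
      _ ≤ c1 * δ + 4 * E K := by rw [hc1def]; ring_nf; linarith
      _ ≤ η/2 + η/2 := by linarith [hδc1, hKE]
      _ = η := by ring
  -- Cauchy–Schwarz
  have hCS : ∀ n, ∫ x, |f n x - g x| ∂μ ≤
      Real.sqrt (∫ x, (Real.sqrt (f n x) - Real.sqrt (g x))^2 ∂μ) *
      Real.sqrt (∫ x, (Real.sqrt (f n x) + Real.sqrt (g x))^2 ∂μ) := by
    intro n
    set u : X → ℝ := fun x => |Real.sqrt (f n x) - Real.sqrt (g x)| with hudef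
    set v : X → ℝ := fun x => Real.sqrt (f n x) + Real.sqrt (g x) with hvdef
    have hu0 : ∀ x, 0 ≤ u x := fun x => abs_nonneg _
    have hv0 : ∀ x, 0 ≤ v x := fun x => add_nonneg (Real.sqrt_nonneg _) (Real.sqrt_nonneg _)
    have hum : Measurable u := ((Real.continuous_sqrt.measurable.comp (hfm n)).sub
      (Real.continuous_sqrt.measurable.comp hgm)).abs
    have hvm : Measurable v := (Real.continuous_sqrt.measurable.comp (hfm n)).add
      (Real.continuous_sqrt.measurable.comp hgm)
    have habs_eq : ∀ x, |f n x - g x| = u x * v x := by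
      intro x
      have hmul : (Real.sqrt (f n x) - Real.sqrt (g x)) * v x = f n x - g x := by
        simp only [hvdef]
        have h1 := Real.sq_sqrt (hf0 n x)
        have h2 := Real.sq_sqrt (hg0 x)
        nlinarith
      rw [← hmul, abs_mul, abs_of_nonneg (hv0 x)]
    have hint_abs : Integrable (fun x => |f n x - g x|) μ := ((packf n).1.sub hgint).abs
    set s : ℝ := ∫ x, (Real.sqrt (f n x) - Real.sqrt (g x))^2 ∂μ with hsdef
    set t : ℝ := ∫ x, (Real.sqrt (f n x) + Real.sqrt (g x))^2 ∂μ with htdef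
    have hs0 : 0 ≤ s := integral_nonneg (fun x => sq_nonneg _)
    have ht0 : 0 ≤ t := integral_nonneg (fun x => sq_nonneg _)
    have hconj2 : (2:ℝ).HolderConjugate 2 := Real.HolderConjugate.two_two
    have key : ENNReal.ofReal (∫ x, |f n x - g x| ∂μ) ≤
        ENNReal.ofReal (Real.sqrt s * Real.sqrt t) := by
      rw [ofReal_integral_eq_lintegral_ofReal hint_abs (ae_of_all _ (fun x => abs_nonneg _))]
      calc ∫⁻ x, ENNReal.ofReal (|f n x - g x|) ∂μ
          = ∫⁻ x, ((fun y => ENNReal.ofReal (u y)) * (fun y => ENNReal.ofReal (v y))) x ∂μ := by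
            apply lintegral_congr; intro x
            simp only [Pi.mul_apply]
            rw [habs_eq x, ENNReal.ofReal_mul (hu0 x)]
        _ ≤ (∫⁻ x, ENNReal.ofReal (u x) ^ (2:ℝ) ∂μ) ^ (1/(2:ℝ)) *
            (∫⁻ x, ENNReal.ofReal (v x) ^ (2:ℝ) ∂μ) ^ (1/(2:ℝ)) :=
            ENNReal.lintegral_mul_le_Lp_mul_Lq μ hconj2
              (ENNReal.measurable_ofReal.comp hum).aemeasurable
              (ENNReal.measurable_ofReal.comp hvm).aemeasurable
        _ = (ENNReal.ofReal s) ^ (1/(2:ℝ)) * (ENNReal.ofReal t) ^ (1/(2:ℝ)) := by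
            congr 1
            · congr 1
              rw [hsdef, ofReal_integral_eq_lintegral_ofReal (hint_sqdiff n)
                (ae_of_all _ (fun x => sq_nonneg _))]
              apply lintegral_congr; intro x
              rw [ENNReal.ofReal_rpow_of_nonneg (hu0 x) (by norm_num)]
              congr 1
              rw [show ((2:ℝ)) = ((2:ℕ):ℝ) by norm_num, Real.rpow_natCast, hudef, sq_abs]
            · congr 1
              rw [htdef, ofReal_integral_eq_lintegral_ofReal (hint_sqsum n)
                (ae_of_all _ (fun x => sq_nonneg _))]
              apply lintegral_congr; intro x
              rw [ENNReal.ofReal_rpow_of_nonneg (hv0 x) (by norm_num)]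
              congr 1
              rw [show ((2:ℝ)) = ((2:ℕ):ℝ) by norm_num, Real.rpow_natCast, hvdef]
        _ = ENNReal.ofReal (Real.sqrt s * Real.sqrt t) := by
            rw [ENNReal.ofReal_rpow_of_nonneg hs0 (by norm_num),
              ENNReal.ofReal_rpow_of_nonneg ht0 (by norm_num),
              ← ENNReal.ofReal_mul (Real.rpow_nonneg hs0 _),
              Real.sqrt_eq_rpow, Real.sqrt_eq_rpow]
    exact (ENNReal.ofReal_le_ofReal_iff (by positivity)).1 key
  -- conclusion
  rw [NormedAddCommGroup.tendsto_atTop]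
  intro ε hε
  have hsT : (0:ℝ) < Real.sqrt T + 1 := by positivity
  set η : ℝ := (ε / (Real.sqrt T + 1))^2 with hηdef
  have hη : 0 < η := by positivity
  obtain ⟨N, hN⟩ := (core η hη).exists_forall_of_atTop
  refine ⟨N, fun n hn => ?_⟩
  have hs0 : 0 ≤ ∫ x, (Real.sqrt (f n x) - Real.sqrt (g x))^2 ∂μ :=
    integral_nonneg (fun x => sq_nonneg _)
  have hchain : ∫ x, |f n x - g x| ∂μ ≤ Real.sqrt η * Real.sqrt T := by
    calc ∫ x, |f n x - g x| ∂μ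
        ≤ Real.sqrt (∫ x, (Real.sqrt (f n x) - Real.sqrt (g x))^2 ∂μ) *
          Real.sqrt (∫ x, (Real.sqrt (f n x) + Real.sqrt (g x))^2 ∂μ) := hCS n
      _ ≤ Real.sqrt η * Real.sqrt T := by
          apply mul_le_mul (Real.sqrt_le_sqrt (hN n hn)) (Real.sqrt_le_sqrt (hTn n))
            (Real.sqrt_nonneg _) (Real.sqrt_nonneg _)
  have hηval : Real.sqrt η = ε / (Real.sqrt T + 1) := by
    rw [hηdef, Real.sqrt_sq (by positivity)]
  have hfinal : Real.sqrt η * Real.sqrt T < ε := by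
    rw [hηval, div_mul_eq_mul_div, div_lt_iff₀ hsT]
    have hsTnn : 0 ≤ Real.sqrt T := Real.sqrt_nonneg T
    nlinarith
  have habs : ‖(∫ x, |f n x - g x| ∂μ) - 0‖ = ∫ x, |f n x - g x| ∂μ := by
    rw [sub_zero, Real.norm_eq_abs, abs_of_nonneg (integral_nonneg (fun x => abs_nonneg _))]
  rw [habs]
  exact lt_of_le_of_lt hchain hfinal
end
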